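/- arXiv:1910.06405 — 4 statements merged into one kernel-verified Lean document; each statement's English description precedes it below -/
import Mathlib

section
/- Let G be a finite simple graph and let H be an induced subgraph of G with |V(G)| − |V(H)| = k. Then gcol(G) ≤ gcol(H) + 2k; that is, deleting k vertices can lower the game coloring number by at most 2k. -/
open scoped Classical

/-- The number of backneighbors of `v` with respect to the ordering `τ`:
neighbors of `v` in `G` that appear (strictly) before `v` in `τ`. -/
noncomputable def backDeg {V : Type*} [Fintype V] (G : SimpleGraph V)
    (τ : List V) (v : V) : ℕ :=
  (Finset.univ.filter (fun u =>
    G.Adj v u ∧ ∃ i j : Fin τ.length, i < j ∧ τ.get i = u ∧ τ.get j = v)).card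

/-- `col(G, τ)`: the maximum over all vertices `v` of
`1 +` (the number of backneighbors of `v` with respect to `τ`). -/
noncomputable def colOrd {V : Type*} [Fintype V] (G : SimpleGraph V)
    (τ : List V) : ℕ :=
  Finset.univ.sup (fun v => 1 + backDeg G τ v)

/-- The minimax value of the ordering game on `G` continued from the position
(partial ordering) `σ`, where `alice = true` means it is Alice's turn to choose
an unchosen vertex (Alice minimizes the final score `colOrd G τ`, Bob
maximizes it).  This value is the least `s` such that the player-to-move's
opponent-robust guarantee holds, i.e. the least `s` such that Alice has a
strategy from this position guaranteeing a score of at most `s`. -/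
noncomputable def gameVal {V : Type*} [Fintype V] (G : SimpleGraph V)
    (alice : Bool) (σ : List V) : ℕ :=
  if h : (Finset.univ.filter (fun v : V => v ∉ σ)).Nonempty then
    if alice then
      (Finset.univ.filter (fun v : V => v ∉ σ)).attach.inf'
        (Finset.attach_nonempty_iff.mpr h)
        (fun v => gameVal G false (σ ++ [v.1]))
    else
      (Finset.univ.filter (fun v : V => v ∉ σ)).attach.sup'
        (Finset.attach_nonempty_iff.mpr h)
        (fun v => gameVal G true (σ ++ [v.1]))
  else colOrd G σ
termination_by (Finset.univ.filter (fun v : V => v ∉ σ)).card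
decreasing_by
  all_goals {
    have hv : ↑v ∉ σ := (Finset.mem_filter.mp v.2).2
    apply Finset.card_lt_card
    constructor
    · intro u hu
      simp only [Finset.mem_filter, List.mem_append] at hu ⊢
      exact ⟨hu.1, fun h' => hu.2 (Or.inl h')⟩
    · intro hsub
      have := hsub (Finset.mem_filter.mpr ⟨Finset.mem_univ _, hv⟩)
      simp at this }

/-- The game coloring number of `G`: the value of the ordering game on `G`
with Alice moving first (also written `gcol_A`). -/
noncomputable def gcol {V : Type*} [Fintype V] (G : SimpleGraph V) : ℕ :=
  gameVal G true []

/-- The value of the Bob ordering game on `G` (Bob moves first). -/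
noncomputable def gcolB {V : Type*} [Fintype V] (G : SimpleGraph V) : ℕ :=
  gameVal G false []

/-- The `σ`-game coloring number of `G`: the value of the `σ`-preordered
ordering game, in which Alice moves first if `|σ|` is even and Bob moves
first if `|σ|` is odd. -/
noncomputable def sigmaGcol {V : Type*} [Fintype V] (G : SimpleGraph V)
    (σ : List V) : ℕ :=
  if Even σ.length then gameVal G true σ else gameVal G false σ

/-- The Alice `σ`-game coloring number: the value of the `σ`-preordered game
in which Alice moves first. -/
noncomputable def sigmaGcolA {V : Type*} [Fintype V] (G : SimpleGraph V)
    (σ : List V) : ℕ :=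
  gameVal G true σ

/-- The Bob `σ`-game coloring number: the value of the `σ`-preordered game
in which Bob moves first. -/
noncomputable def sigmaGcolB {V : Type*} [Fintype V] (G : SimpleGraph V)
    (σ : List V) : ℕ :=
  gameVal G false σ


section Prims
variable {V : Type*} [Fintype V] (G : SimpleGraph V)

/-- "u appears strictly before v" in the list τ. -/
def Before (τ : List V) (u v : V) : Prop :=
  ∃ i j : Fin τ.length, i < j ∧ τ.get i = u ∧ τ.get j = v

lemma backDeg_eq (τ : List V) (v : V) :
    backDeg G τ v = (Finset.univ.filter (fun u => G.Adj v u ∧ Before τ u v)).card := by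
  simp only [backDeg, Before]
  congr 1
  exact (Finset.filter_congr_decidable _ _ _).trans (Finset.filter_congr_decidable _ _ _).symm

lemma gameVal_of_full {σ : List V} (h : ∀ v : V, v ∈ σ) (b : Bool) :
    gameVal G b σ = colOrd G σ := by
  rw [gameVal]
  rw [dif_neg]
  simp [Finset.filter_eq_empty_iff, h, Finset.not_nonempty_iff_eq_empty]

lemma gameVal_true_eq {σ : List V}
    (hne : (Finset.univ.filter (fun v : V => v ∉ σ)).Nonempty) :
    gameVal G true σ = (Finset.univ.filter (fun v : V => v ∉ σ)).attach.inf'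
      (Finset.attach_nonempty_iff.mpr hne)
      (fun v => gameVal G false (σ ++ [v.1])) := by
  rw [gameVal, dif_pos hne]
  rfl

lemma gameVal_false_eq {σ : List V}
    (hne : (Finset.univ.filter (fun v : V => v ∉ σ)).Nonempty) :
    gameVal G false σ = (Finset.univ.filter (fun v : V => v ∉ σ)).attach.sup'
      (Finset.attach_nonempty_iff.mpr hne)
      (fun v => gameVal G true (σ ++ [v.1])) := by
  rw [gameVal, dif_pos hne]
  rfl

lemma gameVal_true_le {σ : List V} {a : V} (ha : a ∉ σ) :
    gameVal G true σ ≤ gameVal G false (σ ++ [a]) := by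
  have hne : (Finset.univ.filter (fun v : V => v ∉ σ)).Nonempty :=
    ⟨a, Finset.mem_filter.mpr ⟨Finset.mem_univ _, ha⟩⟩
  rw [gameVal_true_eq G hne]
  have hmem : a ∈ Finset.univ.filter (fun v : V => v ∉ σ) :=
    Finset.mem_filter.mpr ⟨Finset.mem_univ _, ha⟩
  exact Finset.inf'_le (fun v => gameVal G false (σ ++ [v.1])) (Finset.mem_attach _ ⟨a, hmem⟩)

lemma le_gameVal_false {σ : List V} {a : V} (ha : a ∉ σ) :
    gameVal G true (σ ++ [a]) ≤ gameVal G false σ := by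
  have hne : (Finset.univ.filter (fun v : V => v ∉ σ)).Nonempty :=
    ⟨a, Finset.mem_filter.mpr ⟨Finset.mem_univ _, ha⟩⟩
  rw [gameVal_false_eq G hne]
  have hmem : a ∈ Finset.univ.filter (fun v : V => v ∉ σ) :=
    Finset.mem_filter.mpr ⟨Finset.mem_univ _, ha⟩
  exact Finset.le_sup' (fun v => gameVal G true (σ ++ [v.1])) (Finset.mem_attach _ ⟨a, hmem⟩)

lemma gameVal_false_le {σ : List V} {m : ℕ} (h : ∃ a : V, a ∉ σ)
    (H : ∀ a : V, a ∉ σ → gameVal G true (σ ++ [a]) ≤ m) :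
    gameVal G false σ ≤ m := by
  obtain ⟨a, ha⟩ := h
  have hne : (Finset.univ.filter (fun v : V => v ∉ σ)).Nonempty :=
    ⟨a, Finset.mem_filter.mpr ⟨Finset.mem_univ _, ha⟩⟩
  rw [gameVal_false_eq G hne]
  apply Finset.sup'_le
  rintro ⟨x, hx⟩ -
  exact H x (Finset.mem_filter.mp hx).2

lemma exists_gameVal_true {σ : List V} (h : ∃ a : V, a ∉ σ) :
    ∃ a : V, a ∉ σ ∧ gameVal G false (σ ++ [a]) ≤ gameVal G true σ := by
  obtain ⟨a, ha⟩ := h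
  have hne : (Finset.univ.filter (fun v : V => v ∉ σ)).Nonempty :=
    ⟨a, Finset.mem_filter.mpr ⟨Finset.mem_univ _, ha⟩⟩
  obtain ⟨x, hx, hval⟩ := Finset.exists_mem_eq_inf'
    (Finset.attach_nonempty_iff.mpr hne) (fun v => gameVal G false (σ ++ [v.1]))
  refine ⟨x.1, (Finset.mem_filter.mp x.2).2, ?_⟩
  rw [gameVal_true_eq G hne, hval]

lemma gameVal_of_last {σ : List V} {w : V} (h : ∀ v : V, v ∈ σ ∨ v = w)
    (hw : w ∉ σ) (b : Bool) : gameVal G b σ = gameVal G (!b) (σ ++ [w]) := by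
  have hwmem : w ∈ Finset.univ.filter (fun v : V => v ∉ σ) :=
    Finset.mem_filter.mpr ⟨Finset.mem_univ _, hw⟩
  have hne : (Finset.univ.filter (fun v : V => v ∉ σ)).Nonempty := ⟨w, hwmem⟩
  have hall : ∀ x ∈ Finset.univ.filter (fun v : V => v ∉ σ), x = w := by
    intro x hx
    rcases h x with h' | h'
    · exact absurd h' (Finset.mem_filter.mp hx).2
    · exact h'
  cases b with
  | false =>
    rw [gameVal_false_eq G hne]
    apply le_antisymm
    · apply Finset.sup'_le
      rintro ⟨x, hx⟩ -
      have hxw := hall x hx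
      subst hxw; rfl
    · exact Finset.le_sup' (fun v => gameVal G true (σ ++ [v.1])) (Finset.mem_attach _ ⟨w, hwmem⟩)
  | true =>
    rw [gameVal_true_eq G hne]
    apply le_antisymm
    · exact Finset.inf'_le (fun v => gameVal G false (σ ++ [v.1])) (Finset.mem_attach _ ⟨w, hwmem⟩)
    · apply Finset.le_inf'
      rintro ⟨x, hx⟩ -
      have hxw := hall x hx
      subst hxw; rfl

lemma le_colOrd (τ : List V) (v : V) : 1 + backDeg G τ v ≤ colOrd G τ := by
  exact Finset.le_sup (f := fun v => 1 + backDeg G τ v) (Finset.mem_univ v)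

lemma colOrd_le {τ : List V} {m : ℕ} (h : ∀ v : V, 1 + backDeg G τ v ≤ m) :
    colOrd G τ ≤ m :=
  Finset.sup_le (fun v _ => h v)

end Prims

section BeforeLemmas
variable {V : Type*}

lemma before_iff_split {τ : List V} {u v : V} :
    Before τ u v ↔ ∃ l1 l2, τ = l1 ++ v :: l2 ∧ u ∈ l1 := by
  constructor
  · rintro ⟨i, j, hij, rfl, rfl⟩
    refine ⟨τ.take j, τ.drop (j + 1), ?_, ?_⟩
    · conv_lhs => rw [← List.take_append_drop j τ]
      congr 1
      rw [List.drop_eq_getElem_cons j.isLt]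
      simp [List.get_eq_getElem]
    · have : (τ.take j).get ⟨i, by simp [Nat.lt_min, hij, i.isLt]⟩ = τ.get i := by
        simp [List.get_eq_getElem, List.getElem_take]
      rw [← this]
      exact List.get_mem _ _
  · rintro ⟨l1, l2, rfl, hu⟩
    obtain ⟨i, hi, hgi⟩ := List.getElem_of_mem hu
    have hlen : l1.length < (l1 ++ v :: l2).length := by simp
    have hilen : i < (l1 ++ v :: l2).length := by simp; omega
    refine ⟨⟨i, hilen⟩, ⟨l1.length, hlen⟩, hi, ?_, ?_⟩
    · simp [List.get_eq_getElem, List.getElem_append_left hi, hgi]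
    · simp only [List.get_eq_getElem]
      rw [List.getElem_append_right (le_refl _)]
      simp

lemma before_mem {τ : List V} {u v : V} (h : Before τ u v) : u ∈ τ ∧ v ∈ τ := by
  rw [before_iff_split] at h
  obtain ⟨l1, l2, rfl, hu⟩ := h
  constructor
  · exact List.mem_append.mpr (Or.inl hu)
  · simp

lemma before_append_right {τ ρ : List V} {u v : V} (h : Before τ u v) :
    Before (τ ++ ρ) u v := by
  rw [before_iff_split] at h ⊢
  obtain ⟨l1, l2, rfl, hu⟩ := h
  exact ⟨l1, l2 ++ ρ, by simp, hu⟩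

lemma before_concat_self {τ : List V} {u v : V} (hu : u ∈ τ) :
    Before (τ ++ [v]) u v := by
  rw [before_iff_split]
  exact ⟨τ, [], rfl, hu⟩

lemma before_concat_elim {τ : List V} {a u v : V} (h : Before (τ ++ [a]) u v) :
    Before τ u v ∨ (v = a ∧ u ∈ τ) := by
  obtain ⟨i, j, hij, hgi, hgj⟩ := h
  have hlen : (τ ++ [a]).length = τ.length + 1 := by simp
  by_cases hj : (j : ℕ) < τ.length
  · left
    have hi : (i : ℕ) < τ.length := lt_trans hij hj
    refine ⟨⟨i, hi⟩, ⟨j, hj⟩, hij, ?_, ?_⟩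
    · rw [← hgi]; simp [List.get_eq_getElem, List.getElem_append_left hi]
    · rw [← hgj]; simp [List.get_eq_getElem, List.getElem_append_left hj]
  · right
    have hj' : (j : ℕ) = τ.length := by have := j.isLt; omega
    have hi : (i : ℕ) < τ.length := by have := hij; omega
    constructor
    · rw [← hgj]
      simp [List.get_eq_getElem, hj', List.getElem_append_right (le_refl τ.length)]
    · rw [← hgi]
      have : (τ ++ [a]).get i = τ.get ⟨i, hi⟩ := by
        simp [List.get_eq_getElem, List.getElem_append_left hi]
      rw [this]
      exact List.get_mem _ _

lemma before_map_elim {W : Type*} {f : W → V} {σ : List W} {u v : V}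
    (h : Before (σ.map f) u v) :
    ∃ a b, Before σ a b ∧ u = f a ∧ v = f b := by
  obtain ⟨i, j, hij, hgi, hgj⟩ := h
  have hl : (σ.map f).length = σ.length := by simp
  refine ⟨σ.get ⟨i, by rw [← hl]; exact i.isLt⟩, σ.get ⟨j, by rw [← hl]; exact j.isLt⟩,
    ⟨_, _, hij, rfl, rfl⟩, ?_, ?_⟩
  · rw [← hgi]; simp [List.get_eq_getElem]
  · rw [← hgj]; simp [List.get_eq_getElem]

lemma before_filter {τ : List V} {u v : V} (p : V → Bool) (h : Before τ u v)
    (hu : p u) (hv : p v) : Before (τ.filter p) u v := by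
  rw [before_iff_split] at h ⊢
  obtain ⟨l1, l2, rfl, humem⟩ := h
  refine ⟨l1.filter p, l2.filter p, ?_, ?_⟩
  · rw [List.filter_append, List.filter_cons, if_pos hv]
  · exact List.mem_filter.mpr ⟨humem, hu⟩

lemma before_prefix {τ τ₀ : List V} {u v : V} (hnd : τ.Nodup) (hpre : τ₀ <+: τ)
    (hv : v ∈ τ₀) (h : Before τ u v) : u ∈ τ₀ ∧ u ≠ v := by
  rw [before_iff_split] at h
  obtain ⟨l1, l2, heq, hu⟩ := h
  have hnotin : v ∉ l1 := by
    rw [heq] at hnd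
    have := (List.nodup_append'.mp hnd)
    intro hvl1
    exact this.2.2 hvl1 List.mem_cons_self
  have hl1pre : l1 <+: τ := ⟨v :: l2, heq.symm⟩
  have hle : l1.length ≤ τ₀.length ∨ τ₀.length ≤ l1.length := le_total _ _
  have hl1sub : l1 <+: τ₀ := by
    rcases hle with h1 | h1
    · exact List.prefix_of_prefix_length_le hl1pre hpre h1
    · exfalso
      have := List.prefix_of_prefix_length_le hpre hl1pre h1
      exact hnotin (this.subset hv)
  constructor
  · exact hl1sub.subset hu
  · intro he; subst he; exact hnotin hu
end BeforeLemmas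

section SimC
variable {V : Type*} [Fintype V] (G : SimpleGraph V)

lemma unplayed_card_lt {τ : List V} {a : V} (ha : a ∉ τ) :
    (Finset.univ.filter (fun v : V => v ∉ τ ++ [a])).card <
      (Finset.univ.filter (fun v : V => v ∉ τ)).card := by
  apply Finset.card_lt_card
  constructor
  · intro u hu
    simp only [Finset.mem_filter, List.mem_append] at hu ⊢
    exact ⟨hu.1, fun h' => hu.2 (Or.inl h')⟩
  · intro hsub
    have := hsub (Finset.mem_filter.mpr ⟨Finset.mem_univ _, ha⟩)
    simp at this

lemma simC (n : ℕ) : ∀ (π π' : List V) (w : V) (E : V → V),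
    (Finset.univ.filter (fun v : V => v ∉ π')).card = n →
    π'.toFinset = insert w π.toFinset →
    w ∉ π →
    (∀ v u : V, Before π' u v → Before π u v ∨ (v ∉ π ∧ u ∈ π) ∨ u = E v) →
    ∀ b : Bool, gameVal G b π' ≤ gameVal G b π + 1 := by
  induction n using Nat.strong_induction_on with
  | _ n IH =>
  intro π π' w E hcard hfin hw hinv b
  have hmem' : ∀ x : V, x ∈ π' ↔ (x = w ∨ x ∈ π) := by
    intro x
    rw [← List.mem_toFinset, hfin, Finset.mem_insert, List.mem_toFinset]
  by_cases hfull : ∀ v : V, v ∈ π'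
  · -- base case: π' is complete
    have hπw : ∀ v : V, v ∈ π ∨ v = w := by
      intro v
      rcases (hmem' v).mp (hfull v) with h | h
      · exact Or.inr h
      · exact Or.inl h
    have hfull2 : ∀ v : V, v ∈ π ++ [w] := by
      intro v
      rcases hπw v with h | h
      · exact List.mem_append.mpr (Or.inl h)
      · exact List.mem_append.mpr (Or.inr (by simp [h]))
    rw [gameVal_of_full G hfull b, gameVal_of_last G hπw hw b,
      gameVal_of_full G hfull2 (!b)]
    apply colOrd_le
    intro v
    have hsub : (Finset.univ.filter (fun u => G.Adj v u ∧ Before π' u v)) ⊆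
        insert (E v) (Finset.univ.filter (fun u => G.Adj v u ∧ Before (π ++ [w]) u v)) := by
      intro u hu
      obtain ⟨-, hadj, hb⟩ := Finset.mem_filter.mp hu
      rcases hinv v u hb with h | h | h
      · exact Finset.mem_insert_of_mem (Finset.mem_filter.mpr
          ⟨Finset.mem_univ _, hadj, before_append_right h⟩)
      · have hv' : v = w := by
          rcases (hmem' v).mp (before_mem hb).2 with h' | h'
          · exact h'
          · exact absurd h' h.1
        subst hv'
        exact Finset.mem_insert_of_mem (Finset.mem_filter.mpr
          ⟨Finset.mem_univ _, hadj, before_concat_self h.2⟩)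
      · subst h
        exact Finset.mem_insert_self _ _
    have hbd : backDeg G π' v ≤ backDeg G (π ++ [w]) v + 1 := by
      rw [backDeg_eq, backDeg_eq]
      exact le_trans (Finset.card_le_card hsub) (Finset.card_insert_le _ _)
    have := le_colOrd G (π ++ [w]) v
    omega
  · -- inductive case
    push_neg at hfull
    -- common facts
    cases b with
    | true =>
      have hexπ : ∃ a : V, a ∉ π := ⟨w, hw⟩
      obtain ⟨a, ha, hopt⟩ := exists_gameVal_true G hexπ
      by_cases haw : a = w
      · -- Alice's simulated move is the pending vertex a
        subst haw
        obtain ⟨a', ha'⟩ := hfull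
        have ha'a : a' ≠ a := fun h => ha' ((hmem' a').mpr (Or.inl h))
        have ha'π : a' ∉ π := fun h => ha' ((hmem' a').mpr (Or.inr h))
        have step : gameVal G false (π' ++ [a']) ≤ gameVal G false (π ++ [a]) + 1 := by
          apply IH _ (by rw [← hcard]; exact unplayed_card_lt ha') _ _ a' E rfl _ _ _ false
          · ext x
            simp only [List.toFinset_append, List.toFinset_cons, List.toFinset_nil,
              Finset.mem_union, Finset.mem_insert, Finset.mem_singleton, hfin,
              Finset.insert_empty]
            tauto
          · intro h
            rcases List.mem_append.mp h with h' | h'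
            · exact ha'π h'
            · simp at h'; exact ha'a h'
          · intro v u hb
            rcases before_concat_elim hb with hbb | ⟨rfl, hu⟩
            · rcases hinv v u hbb with h | h | h
              · exact Or.inl (before_append_right h)
              · have hv' : v = a ∨ v ∈ π := (hmem' v).mp (before_mem hbb).2
                rcases hv' with rfl | hv''
                · exact Or.inl (before_concat_self h.2)
                · exact absurd hv'' h.1
              · exact Or.inr (Or.inr h)
            · refine Or.inr (Or.inl ⟨?_, ?_⟩)
              · intro hmem
                rcases List.mem_append.mp hmem with h' | h'
                · exact ha'π h'
                · simp at h'; exact ha'a h'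
              · rcases (hmem' u).mp hu with rfl | h'
                · exact List.mem_append.mpr (Or.inr (by simp))
                · exact List.mem_append.mpr (Or.inl h')
        calc gameVal G true π' ≤ gameVal G false (π' ++ [a']) := gameVal_true_le G ha'
          _ ≤ gameVal G false (π ++ [a]) + 1 := step
          _ ≤ gameVal G true π + 1 := by omega
      · -- Alice's simulated move a is playable in π'
        have haπ' : a ∉ π' := fun h => by
          rcases (hmem' a).mp h with h' | h'
          · exact haw h'
          · exact ha h'
        have step : gameVal G false (π' ++ [a]) ≤ gameVal G false (π ++ [a]) + 1 := by
          apply IH _ (by rw [← hcard]; exact unplayed_card_lt haπ') _ _ w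
            (fun x => if x = a then w else E x) rfl _ _ _ false
          · ext x
            simp only [List.toFinset_append, List.toFinset_cons, List.toFinset_nil,
              Finset.mem_union, Finset.mem_insert, Finset.mem_singleton, hfin,
              Finset.insert_empty]
            tauto
          · intro h
            rcases List.mem_append.mp h with h' | h'
            · exact hw h'
            · simp at h'; exact haw h'.symm
          · intro v u hb
            rcases before_concat_elim hb with hbb | ⟨rfl, hu⟩
            · have hvπ' : v ∈ π' := (before_mem hbb).2
              have hva : v ≠ a := fun h => haπ' (h ▸ hvπ')
              rcases hinv v u hbb with h | h | h
              · exact Or.inl (before_append_right h)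
              · refine Or.inr (Or.inl ⟨?_, List.mem_append.mpr (Or.inl h.2)⟩)
                intro hmem
                rcases List.mem_append.mp hmem with h' | h'
                · exact h.1 h'
                · simp at h'; exact hva h'
              · refine Or.inr (Or.inr ?_)
                simp only [if_neg hva]; exact h
            · rcases (hmem' u).mp hu with rfl | h'
              · exact Or.inr (Or.inr (by simp))
              · exact Or.inl (before_concat_self h')
        calc gameVal G true π' ≤ gameVal G false (π' ++ [a]) := gameVal_true_le G haπ'
          _ ≤ gameVal G false (π ++ [a]) + 1 := step
          _ ≤ gameVal G true π + 1 := by omega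
    | false =>
      apply gameVal_false_le G hfull
      intro u hu
      have huw : u ≠ w := fun h => hu ((hmem' u).mpr (Or.inl h))
      have huπ : u ∉ π := fun h => hu ((hmem' u).mpr (Or.inr h))
      have step : gameVal G true (π' ++ [u]) ≤ gameVal G true (π ++ [u]) + 1 := by
        apply IH _ (by rw [← hcard]; exact unplayed_card_lt hu) _ _ w
          (fun x => if x = u then w else E x) rfl _ _ _ true
        · ext x
          simp only [List.toFinset_append, List.toFinset_cons, List.toFinset_nil,
            Finset.mem_union, Finset.mem_insert, Finset.mem_singleton, hfin,
            Finset.insert_empty]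
          tauto
        · intro h
          rcases List.mem_append.mp h with h' | h'
          · exact hw h'
          · simp at h'; exact huw h'.symm
        · intro v u' hb
          rcases before_concat_elim hb with hbb | ⟨rfl, hu'⟩
          · have hvπ' : v ∈ π' := (before_mem hbb).2
            have hvu : v ≠ u := fun h => hu (h ▸ hvπ')
            rcases hinv v u' hbb with h | h | h
            · exact Or.inl (before_append_right h)
            · refine Or.inr (Or.inl ⟨?_, List.mem_append.mpr (Or.inl h.2)⟩)
              intro hmem
              rcases List.mem_append.mp hmem with h' | h'
              · exact h.1 h'
              · simp at h'; exact hvu h'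
            · refine Or.inr (Or.inr ?_)
              simp only [if_neg hvu]; exact h
          · rcases (hmem' u').mp hu' with rfl | h'
            · exact Or.inr (Or.inr (by simp))
            · exact Or.inl (before_concat_self h')
      calc gameVal G true (π' ++ [u]) ≤ gameVal G true (π ++ [u]) + 1 := step
        _ ≤ gameVal G false π + 1 := by
          have := le_gameVal_false G huπ
          omega

lemma simC_concat {σ : List V} {u : V} (hu : u ∉ σ) (b : Bool) :
    gameVal G b (σ ++ [u]) ≤ gameVal G b σ + 1 := by
  apply simC G _ σ (σ ++ [u]) u (fun _ => u) rfl _ hu _ b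
  · ext x; simp
  · intro v u' hb
    rcases before_concat_elim hb with hbb | ⟨rfl, hu'⟩
    · exact Or.inl hbb
    · exact Or.inr (Or.inl ⟨hu, hu'⟩)

end SimC

section Transfer
variable {V : Type*} [Fintype V] (G : SimpleGraph V) (s : Set V)

lemma nodup_concat {W : Type*} {τ : List W} {a : W} (hnd : τ.Nodup) (ha : a ∉ τ) :
    (τ ++ [a]).Nodup := by
  rw [List.nodup_append']
  refine ⟨hnd, List.nodup_singleton _, ?_⟩
  intro y hy hy2
  rw [List.mem_singleton] at hy2
  subst hy2
  exact ha hy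

lemma simC_chain {σ : List V} (hnd : σ.Nodup) (b : Bool) :
    gameVal G b σ ≤ gameVal G b [] + σ.length := by
  induction σ using List.reverseRecOn with
  | nil => simp
  | append_singleton ρ u IH =>
    have hρ : ρ.Nodup := (List.nodup_append'.mp hnd).1
    have hu : u ∉ ρ := by
      have := (List.nodup_append'.mp hnd).2.2
      intro h
      exact this h (by simp)
    have h1 := simC_concat G hu b
    have h2 := IH hρ
    simp only [List.length_append, List.length_singleton]
    omega

lemma gcolB_le : gameVal G false [] ≤ gameVal G true [] + 1 := by
  by_cases hex : ∃ a : V, a ∉ ([] : List V)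
  · apply gameVal_false_le G hex
    intro a _
    exact simC_concat G (by simp) true
  · push_neg at hex
    rw [gameVal_of_full G hex false, ← gameVal_of_full G hex true]
    omega

omit [Fintype V] in
lemma induce_adj' {a b : ↥s} (h : G.Adj ↑a ↑b) : (G.induce s).Adj a b := h

lemma transfer (k : ℕ) (hk : (Finset.univ.filter (fun x : V => x ∉ s)).card = k)
    (τ₀ : List V) (hcomp : ∀ x : V, x ∉ s → x ∈ τ₀) (hlen : τ₀.length ≤ 2 * k) :
    ∀ (n : ℕ) (b : Bool) (σ : List ↥s) (τ : List V),
    (Finset.univ.filter (fun v : V => v ∉ τ)).card = n →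
    τ.Nodup → τ₀ <+: τ →
    τ.filter (fun x => decide (x ∈ s)) = σ.map Subtype.val →
    gameVal G b τ ≤ max (gameVal (G.induce s) b σ + k) (2 * k) := by
  intro n
  induction n using Nat.strong_induction_on with
  | _ n IH =>
  intro b σ τ hcard hnd hpre hfil
  have hmemτ : ∀ a : ↥s, (↑a ∈ τ ↔ a ∈ σ) := by
    intro a
    constructor
    · intro h
      have : (a : V) ∈ τ.filter (fun x => decide (x ∈ s)) :=
        List.mem_filter.mpr ⟨h, decide_eq_true a.2⟩
      rw [hfil] at this
      obtain ⟨b', hb', he⟩ := List.mem_map.mp this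
      rwa [← Subtype.ext he]
    · intro h
      have : (a : V) ∈ τ.filter (fun x => decide (x ∈ s)) := by
        rw [hfil]
        exact List.mem_map.mpr ⟨a, h, rfl⟩
      exact (List.mem_filter.mp this).1
  have hunpl : ∀ x : V, x ∉ τ → x ∈ s := by
    intro x hx
    by_contra hxs
    exact hx (hpre.subset (hcomp x hxs))
  by_cases hfullτ : ∀ v : V, v ∈ τ
  · -- base case
    have hfullσ : ∀ a : ↥s, a ∈ σ := fun a => (hmemτ a).mp (hfullτ a.1)
    rw [gameVal_of_full G hfullτ b, gameVal_of_full (G.induce s) hfullσ b]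
    apply colOrd_le
    intro v
    by_cases hvs : v ∈ s
    · have hsub : (Finset.univ.filter (fun u => G.Adj v u ∧ Before τ u v)) ⊆
          (Finset.univ.filter (fun x : V => x ∉ s)) ∪
            (Finset.image Subtype.val (Finset.univ.filter
              (fun u : ↥s => (G.induce s).Adj ⟨v, hvs⟩ u ∧ Before σ u ⟨v, hvs⟩))) := by
        intro u hu
        obtain ⟨-, hadj, hb⟩ := Finset.mem_filter.mp hu
        by_cases hus : u ∈ s
        · apply Finset.mem_union_right
          have hbf := before_filter (fun x => decide (x ∈ s)) hb
            (decide_eq_true hus) (decide_eq_true hvs)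
          rw [hfil] at hbf
          obtain ⟨a', b', hab, hua, hvb⟩ := before_map_elim hbf
          have ha' : a' = ⟨u, hus⟩ := Subtype.ext hua.symm
          have hb' : b' = ⟨v, hvs⟩ := Subtype.ext hvb.symm
          subst ha'; subst hb'
          exact Finset.mem_image.mpr ⟨⟨u, hus⟩,
            Finset.mem_filter.mpr ⟨Finset.mem_univ _, induce_adj' G s hadj, hab⟩, rfl⟩
        · exact Finset.mem_union_left _ (Finset.mem_filter.mpr ⟨Finset.mem_univ _, hus⟩)
      have hcardle : backDeg G τ v ≤ k + backDeg (G.induce s) σ ⟨v, hvs⟩ := by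
        rw [backDeg_eq, backDeg_eq]
        calc _ ≤ _ := Finset.card_le_card hsub
          _ ≤ _ + _ := Finset.card_union_le _ _
          _ ≤ k + _ := by
            rw [hk]
            exact add_le_add le_rfl (Finset.card_image_le)
      have hcol := le_colOrd (G.induce s) σ ⟨v, hvs⟩
      have hfin : 1 + backDeg G τ v ≤ colOrd (G.induce s) σ + k := by omega
      exact le_trans hfin (le_max_of_le_left (by omega))
    · -- v outside s
      have hvτ₀ : v ∈ τ₀ := hcomp v hvs
      have hsub : (Finset.univ.filter (fun u => G.Adj v u ∧ Before τ u v)) ⊆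
          τ₀.toFinset.erase v := by
        intro u hu
        obtain ⟨-, hadj, hb⟩ := Finset.mem_filter.mp hu
        obtain ⟨h1, h2⟩ := before_prefix hnd hpre hvτ₀ hb
        exact Finset.mem_erase.mpr ⟨h2, List.mem_toFinset.mpr h1⟩
      have h1 : backDeg G τ v ≤ τ₀.toFinset.card - 1 := by
        rw [backDeg_eq]
        calc _ ≤ _ := Finset.card_le_card hsub
          _ = τ₀.toFinset.card - 1 := Finset.card_erase_of_mem (List.mem_toFinset.mpr hvτ₀)
      have h2 : τ₀.toFinset.card ≤ τ₀.length := List.toFinset_card_le _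
      have h3 : (1 : ℕ) ≤ τ₀.toFinset.card := Finset.card_pos.mpr ⟨v, List.mem_toFinset.mpr hvτ₀⟩
      apply le_max_of_le_right
      omega
  · -- inductive case
    push_neg at hfullτ
    obtain ⟨x, hx⟩ := hfullτ
    have hexσ : ∃ a : ↥s, a ∉ σ :=
      ⟨⟨x, hunpl x hx⟩, fun hcon => hx ((hmemτ _).mpr hcon)⟩
    have push : ∀ (a : ↥s) (b' : Bool), (↑a ∉ τ) →
        gameVal G b' (τ ++ [(↑a : V)]) ≤
          max (gameVal (G.induce s) b' (σ ++ [a]) + k) (2 * k) := by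
      intro a b' haτ
      apply IH _ (by rw [← hcard]; exact unplayed_card_lt haτ) b' (σ ++ [a])
        (τ ++ [(↑a : V)]) rfl (nodup_concat hnd haτ) (hpre.trans (List.prefix_append _ _))
      rw [List.filter_append, hfil]
      have h5 : List.filter (fun x => decide (x ∈ s)) [(↑a : V)] = [(↑a : V)] := by
        simp [decide_eq_true a.2]
      rw [h5, List.map_append]
      rfl
    cases b with
    | true =>
      obtain ⟨a, ha, hopt⟩ := exists_gameVal_true (G.induce s) hexσ
      have haτ : (↑a : V) ∉ τ := fun h => ha ((hmemτ a).mp h)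
      calc gameVal G true τ ≤ gameVal G false (τ ++ [(↑a : V)]) := gameVal_true_le G haτ
        _ ≤ max (gameVal (G.induce s) false (σ ++ [a]) + k) (2 * k) := push a false haτ
        _ ≤ max (gameVal (G.induce s) true σ + k) (2 * k) := by
          apply max_le_max _ le_rfl
          omega
    | false =>
      apply gameVal_false_le G ⟨x, hx⟩
      intro u hu
      have hus : u ∈ s := hunpl u hu
      have huσ : (⟨u, hus⟩ : ↥s) ∉ σ := fun hcon => hu ((hmemτ _).mpr hcon)
      have hpu := push ⟨u, hus⟩ true hu
      calc gameVal G true (τ ++ [u]) ≤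
            max (gameVal (G.induce s) true (σ ++ [⟨u, hus⟩]) + k) (2 * k) := hpu
        _ ≤ max (gameVal (G.induce s) false σ + k) (2 * k) := by
          apply max_le_max _ le_rfl
          have := le_gameVal_false (G.induce s) huσ
          omega

end Transfer

section Phase
variable {V : Type*} [Fintype V] (G : SimpleGraph V) (s : Set V)

lemma filter_length_split (l : List V) (p : V → Bool) :
    (l.filter p).length + (l.filter (fun x => !p x)).length = l.length := by
  induction l with
  | nil => simp
  | cons a l ih =>
    rw [List.filter_cons, List.filter_cons]
    cases hpa : p a <;> simp [hpa] <;> omega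

omit [Fintype V] in
lemma lift_exists (τ : List V) :
    ∃ σ : List ↥s, σ.map Subtype.val = τ.filter (fun x => decide (x ∈ s)) := by
  induction τ with
  | nil => exact ⟨[], rfl⟩
  | cons a τ ih =>
    obtain ⟨σ, hσ⟩ := ih
    rw [List.filter_cons]
    by_cases h : a ∈ s
    · exact ⟨⟨a, h⟩ :: σ, by simp [decide_eq_true h, hσ]⟩
    · exact ⟨σ, by simp [h, hσ]⟩

lemma filter_not_length_le (τ : List V) (hnd : τ.Nodup) :
    (τ.filter (fun x => !decide (x ∈ s))).length ≤
      (Finset.univ.filter (fun x : V => x ∉ s)).card := by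
  have hnd' : (τ.filter (fun x => !decide (x ∈ s))).Nodup := hnd.filter _
  rw [← List.toFinset_card_of_nodup hnd']
  apply Finset.card_le_card
  intro x hx
  rw [List.mem_toFinset, List.mem_filter] at hx
  have hxs : ¬ (x ∈ s) := by simpa using hx.2
  exact Finset.mem_filter.mpr ⟨Finset.mem_univ _, hxs⟩

lemma phase (k : ℕ) (hk : (Finset.univ.filter (fun x : V => x ∉ s)).card = k) :
    ∀ (r : ℕ) (τ : List V),
    (Finset.univ.filter (fun x : V => x ∉ s ∧ x ∉ τ)).card = r →
    τ.Nodup →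
    τ.length ≤ 2 * (τ.filter (fun x => !decide (x ∈ s))).length →
    gameVal G true τ ≤ gameVal (G.induce s) true [] + 2 * k := by
  intro r
  induction r using Nat.strong_induction_on with
  | _ r IH =>
  intro τ hr hnd hbal
  have hsplit := filter_length_split τ (fun x => decide (x ∈ s))
  have hcCk : (τ.filter (fun x => !decide (x ∈ s))).length ≤ k :=
    hk ▸ filter_not_length_le s τ hnd
  obtain ⟨σ, hσ⟩ := lift_exists s τ
  have hσnd : σ.Nodup := by
    have h1 : (σ.map Subtype.val).Nodup := by rw [hσ]; exact hnd.filter _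
    exact h1.of_map
  have hσlen : σ.length = (τ.filter (fun x => decide (x ∈ s))).length := by
    rw [← hσ, List.length_map]
  by_cases hmiss : ∀ x : V, x ∉ s → x ∈ τ
  · -- all outside vertices already placed: hand off to transfer
    have htr := transfer G s k hk τ hmiss (by omega) _ true σ τ rfl hnd
      (List.prefix_refl τ) hσ.symm
    have hchain := simC_chain (G.induce s) hσnd true
    refine le_trans htr (max_le (by omega) (by omega))
  · push_neg at hmiss
    obtain ⟨d, hds, hdτ⟩ := hmiss
    have h1 : gameVal G true τ ≤ gameVal G false (τ ++ [d]) := gameVal_true_le G hdτ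
    have hcCd : (τ ++ [d]).filter (fun x => !decide (x ∈ s)) =
        τ.filter (fun x => !decide (x ∈ s)) ++ [d] := by
      rw [List.filter_append]
      simp [hds]
    have hnd2 : (τ ++ [d]).Nodup := nodup_concat hnd hdτ
    by_cases hfull2 : ∀ v : V, v ∈ τ ++ [d]
    · -- game ends right after Alice's move; hand off to transfer with Bob to move
      have hcomp2 : ∀ x : V, x ∉ s → x ∈ τ ++ [d] := fun x _ => hfull2 x
      have hcCk2 : (τ.filter (fun x => !decide (x ∈ s))).length + 1 ≤ k := by
        have h5 := filter_not_length_le s (τ ++ [d]) hnd2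
        rw [hcCd, List.length_append, List.length_singleton, hk] at h5
        omega
      have hlen2 : (τ ++ [d]).length ≤ 2 * k := by
        rw [List.length_append, List.length_singleton]
        omega
      have hσ2 : (τ ++ [d]).filter (fun x => decide (x ∈ s)) = σ.map Subtype.val := by
        rw [List.filter_append]
        simp [hds]
        exact hσ.symm
      have htr := transfer G s k hk (τ ++ [d]) hcomp2 hlen2 _ false σ (τ ++ [d]) rfl hnd2
        (List.prefix_refl _) hσ2
      have hchain := simC_chain (G.induce s) hσnd false
      have hB := gcolB_le (G.induce s)
      refine le_trans h1 (le_trans htr (max_le (by omega) (by omega)))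
    · push_neg at hfull2
      obtain ⟨y, hy⟩ := hfull2
      refine le_trans h1 (gameVal_false_le G ⟨y, hy⟩ ?_)
      intro u hu
      have hnd3 : (τ ++ [d] ++ [u]).Nodup := nodup_concat hnd2 hu
      have hlt : (Finset.univ.filter (fun x : V => x ∉ s ∧ x ∉ τ ++ [d] ++ [u])).card < r := by
        rw [← hr]
        apply Finset.card_lt_card
        constructor
        · intro x hx
          simp only [Finset.mem_filter, List.mem_append, List.mem_singleton] at hx ⊢
          exact ⟨hx.1, hx.2.1, fun h => hx.2.2 (Or.inl (Or.inl h))⟩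
        · intro hsub
          have hd : d ∈ Finset.univ.filter (fun x : V => x ∉ s ∧ x ∉ τ) :=
            Finset.mem_filter.mpr ⟨Finset.mem_univ _, hds, hdτ⟩
          have := hsub hd
          simp [List.mem_append] at this
      have hbal3 : (τ ++ [d] ++ [u]).length ≤
          2 * ((τ ++ [d] ++ [u]).filter (fun x => !decide (x ∈ s))).length := by
        rw [List.filter_append, hcCd]
        simp only [List.length_append, List.length_singleton]
        omega
      exact IH _ hlt (τ ++ [d] ++ [u]) rfl hnd3 hbal3

end Phase

/-- If `H` is an induced subgraph of `G` (the subgraph induced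
on a vertex subset `s`) with `|V(G)| − |V(H)| = k`, then
`gcol(G) ≤ gcol(H) + 2k`. -/
theorem gcol_le_gcol_induce_add {V : Type*} [Fintype V] (G : SimpleGraph V)
    (s : Set V) (k : ℕ) (hk : Fintype.card V - s.ncard = k) :
    gcol G ≤ gcol (G.induce s) + 2 * k := by
  have hphase := phase G s (Finset.univ.filter (fun x : V => x ∉ s)).card rfl _ [] rfl
    List.nodup_nil (by simp)
  have hpart : (Finset.univ.filter (fun x : V => x ∈ s)).card +
      (Finset.univ.filter (fun x : V => x ∉ s)).card = Fintype.card V :=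
    Finset.card_filter_add_card_filter_not _
  have hncard : s.ncard = (Finset.univ.filter (fun x : V => x ∈ s)).card := by
    rw [Set.ncard_eq_toFinset_card']
    congr 1
    ext x
    simp
  have hkk : (Finset.univ.filter (fun x : V => x ∉ s)).card = k := by omega
  rw [hkk] at hphase
  exact hphase
end

section
/- For every n ≥ 3, the join of the complete graph on n vertices with the edgeless graph on n − 1 vertices satisfies gcol(K_n ∨ K̄_{n−1}) = 2n − 1. -/
open scoped Classical

/-- The join `K_n ∨ K̄_m` of the complete graph on `n` vertices with the
edgeless graph on `m` vertices: the `K_n`-part vertices are pairwise adjacent,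
the `K̄_m`-part vertices are pairwise nonadjacent, and every `K_n`-part vertex
is adjacent to every `K̄_m`-part vertex. -/
def joinKE (n m : ℕ) : SimpleGraph (Fin n ⊕ Fin m) where
  Adj x y := x ≠ y ∧ (x.isLeft ∨ y.isLeft)
  symm := ⟨fun _ _ h => ⟨h.1.symm, h.2.symm⟩⟩
  loopless := ⟨fun _ h => h.1 rfl⟩

open Finset

variable {V : Type*} [Fintype V]

lemma remaining_card_lt (σ : List V) (v : V) (hv : v ∉ σ) :
    (Finset.univ.filter (fun u : V => u ∉ σ ++ [v])).card
      < (Finset.univ.filter (fun u : V => u ∉ σ)).card := by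
  apply Finset.card_lt_card
  constructor
  · intro u hu
    simp only [Finset.mem_filter, List.mem_append] at hu ⊢
    exact ⟨hu.1, fun h' => hu.2 (Or.inl h')⟩
  · intro hsub
    have := hsub (Finset.mem_filter.mpr ⟨Finset.mem_univ _, hv⟩)
    simp at this

lemma colOrd_le_s9 (G : SimpleGraph V) (hV : 1 ≤ Fintype.card V) (τ : List V) :
    colOrd G τ ≤ Fintype.card V := by
  apply Finset.sup_le
  intro v _
  have hsub : (Finset.univ.filter (fun u =>
      G.Adj v u ∧ ∃ i j : Fin τ.length, i < j ∧ τ.get i = u ∧ τ.get j = v))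
      ⊆ Finset.univ.erase v := by
    intro u hu
    simp only [Finset.mem_filter] at hu
    exact Finset.mem_erase.mpr ⟨hu.2.1.ne', Finset.mem_univ _⟩
  have h1 : backDeg G τ v ≤ Fintype.card V - 1 := by
    have := Finset.card_le_card hsub
    rwa [Finset.card_erase_of_mem (Finset.mem_univ v), Finset.card_univ] at this
  have : backDeg G τ v ≤ Fintype.card V - 1 := h1
  omega

lemma gameVal_le (G : SimpleGraph V) (hV : 1 ≤ Fintype.card V) :
    ∀ (k : ℕ) (σ : List V) (flag : Bool),
      (Finset.univ.filter (fun v : V => v ∉ σ)).card ≤ k →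
      gameVal G flag σ ≤ Fintype.card V := by
  intro k
  induction k with
  | zero =>
    intro σ flag h
    rw [gameVal, dif_neg (by rw [Finset.not_nonempty_iff_eq_empty, ← Finset.card_eq_zero]; omega)]
    exact colOrd_le_s9 G hV σ
  | succ k ih =>
    intro σ flag h
    rw [gameVal]
    by_cases hne : (Finset.univ.filter (fun v : V => v ∉ σ)).Nonempty
    · rw [dif_pos hne]
      cases flag
      · simp only [Bool.false_eq_true, if_false]
        apply Finset.sup'_le
        intro v _
        apply ih
        have := remaining_card_lt σ v.1 (Finset.mem_filter.mp v.2).2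
        omega
      · simp only [if_pos]
        obtain ⟨v, hv⟩ := Finset.attach_nonempty_iff.mpr hne
        refine le_trans (Finset.inf'_le _ hv) (ih _ _ ?_)
        have := remaining_card_lt σ v.1 (Finset.mem_filter.mp v.2).2
        omega
    · rw [dif_neg hne]
      exact colOrd_le_s9 G hV σ

lemma remaining_card {V : Type*} [Fintype V] (σ : List V) (hnd : σ.Nodup) :
    (Finset.univ.filter (fun v : V => v ∉ σ)).card = Fintype.card V - σ.length := by
  have h : (Finset.univ.filter (fun v : V => v ∉ σ)) = Finset.univ \ σ.toFinset := by
    ext u; simp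
  rw [h, Finset.card_sdiff_of_subset (Finset.subset_univ _), Finset.card_univ,
    List.toFinset_card_of_nodup hnd]

lemma rem_nonempty {V : Type*} [Fintype V] (σ : List V) (hnd : σ.Nodup)
    (h : σ.length < Fintype.card V) :
    (Finset.univ.filter (fun v : V => v ∉ σ)).Nonempty := by
  apply Finset.card_pos.mp
  rw [remaining_card σ hnd]; omega

lemma rem_empty {V : Type*} [Fintype V] (σ : List V) (hnd : σ.Nodup)
    (h : Fintype.card V ≤ σ.length) :
    ¬ (Finset.univ.filter (fun v : V => v ∉ σ)).Nonempty := by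
  rw [Finset.nonempty_iff_ne_empty, ne_eq, not_not, ← Finset.card_eq_zero,
    remaining_card σ hnd]
  omega

lemma mem_rem_filter {V : Type*} [Fintype V] (σ : List V) (w : V) (hw : w ∉ σ) :
    w ∈ Finset.univ.filter (fun v : V => v ∉ σ) :=
  Finset.mem_filter.mpr ⟨Finset.mem_univ _, hw⟩

lemma not_mem_of_mem_rem {V : Type*} [Fintype V] (σ : List V) (w : V)
    (hw : w ∈ Finset.univ.filter (fun v : V => v ∉ σ)) : w ∉ σ :=
  (Finset.mem_filter.mp hw).2

lemma rem_card_eq_one_all {V : Type*} [Fintype V] (σ : List V) (hnd : σ.Nodup)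
    (h : σ.length + 1 = Fintype.card V) (v : V) (hv : v ∉ σ) :
    ∀ u, u ≠ v → u ∈ σ := by
  have hc : (Finset.univ.filter (fun x : V => x ∉ σ)).card = 1 := by
    rw [remaining_card σ hnd]; omega
  obtain ⟨a, ha⟩ := Finset.card_eq_one.mp hc
  have hva : v = a := by
    have := mem_rem_filter σ v hv
    rw [ha, Finset.mem_singleton] at this
    exact this
  intro u hu
  by_contra hus
  have := mem_rem_filter σ u hus
  rw [ha, Finset.mem_singleton] at this
  exact hu (this.trans hva.symm)

lemma colOrd_ge {V : Type*} [Fintype V] (G : SimpleGraph V) (σ : List V) (v : V)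
    (hall : ∀ u, u ≠ v → u ∈ σ)
    (hadj : ∀ u, u ≠ v → G.Adj v u) :
    Fintype.card V ≤ colOrd G (σ ++ [v]) := by
  have hb : Fintype.card V - 1 ≤ backDeg G (σ ++ [v]) v := by
    unfold backDeg
    refine le_trans (le_of_eq ?_) (Finset.card_le_card (s := Finset.univ.erase v) ?_)
    · rw [Finset.card_erase_of_mem (Finset.mem_univ v), Finset.card_univ]
    · intro u hu
      have hune : u ≠ v := (Finset.mem_erase.mp hu).1
      obtain ⟨i', hi'⟩ := List.mem_iff_get.mp (hall u hune)
      have hL : (σ ++ [v]).length = σ.length + 1 := by simp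
      have hlt : i'.1 < σ.length := i'.isLt
      refine Finset.mem_filter.mpr ⟨Finset.mem_univ _, hadj u hune,
        ⟨i'.1, by omega⟩, ⟨σ.length, by omega⟩, ?_, ?_, ?_⟩
      · exact hlt
      · simp only [List.get_eq_getElem]
        rw [List.getElem_append_left hlt]
        simpa using hi'
      · simp only [List.get_eq_getElem]
        simp
  have hpos : 1 ≤ Fintype.card V := Fintype.card_pos_iff.mpr ⟨v⟩
  have hs : 1 + backDeg G (σ ++ [v]) v ≤ colOrd G (σ ++ [v]) := by
    unfold colOrd
    exact Finset.le_sup (f := fun u => 1 + backDeg G (σ ++ [v]) u) (Finset.mem_univ v)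
  omega

noncomputable def rightRem (n : ℕ) (σ : List (Fin n ⊕ Fin (n-1))) : ℕ :=
  (@Finset.filter _ (fun v : Fin n ⊕ Fin (n-1) => v ∉ σ ∧ v.isRight = true)
    (fun _ => Classical.propDecidable _) Finset.univ).card

lemma rightRem_nil_le (n : ℕ) (hn : 3 ≤ n) : rightRem n [] ≤ n - 1 := by
  unfold rightRem
  apply le_trans ?_ (le_of_eq (by simp : (Finset.univ : Finset (Fin (n-1))).card = n - 1))
  apply Finset.card_le_card_of_injOn (Sum.elim (fun _ => (⟨0, by omega⟩ : Fin (n-1))) id)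
    (fun a _ => Finset.mem_univ _)
  intro x hx y hy hxy
  simp only [Finset.coe_filter, Set.mem_setOf_eq] at hx hy
  cases x <;> cases y <;> simp_all

lemma rightRem_append_le (n : ℕ) (σ : List (Fin n ⊕ Fin (n-1))) (w : Fin n ⊕ Fin (n-1)) :
    rightRem n (σ ++ [w]) ≤ rightRem n σ := by
  unfold rightRem
  apply Finset.card_le_card
  intro u hu
  simp only [Finset.mem_filter, List.mem_append] at hu ⊢
  tauto

lemma mem_rightRem_filter (n : ℕ) (σ : List (Fin n ⊕ Fin (n-1))) (w : Fin n ⊕ Fin (n-1))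
    (hw : w ∉ σ) (hR : w.isRight = true) :
    w ∈ @Finset.filter _ (fun v : Fin n ⊕ Fin (n-1) => v ∉ σ ∧ v.isRight = true)
      (fun _ => Classical.propDecidable _) Finset.univ := by
  simp only [Finset.mem_filter]
  exact ⟨Finset.mem_univ _, hw, hR⟩

lemma rightRem_append_lt (n : ℕ) (σ : List (Fin n ⊕ Fin (n-1))) (w : Fin n ⊕ Fin (n-1))
    (hw : w ∉ σ) (hR : w.isRight = true) :
    rightRem n (σ ++ [w]) < rightRem n σ := by
  unfold rightRem
  apply Finset.card_lt_card
  constructor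
  · intro u hu
    simp only [Finset.mem_filter, List.mem_append] at hu ⊢
    tauto
  · intro hsub
    have h1 := hsub (mem_rightRem_filter n σ w hw hR)
    simp only [Finset.mem_filter] at h1
    simp at h1

lemma exists_right (n : ℕ) (σ : List (Fin n ⊕ Fin (n-1))) (h : 0 < rightRem n σ) :
    ∃ w : Fin n ⊕ Fin (n-1), w ∉ σ ∧ w.isRight = true := by
  unfold rightRem at h
  obtain ⟨w, hw⟩ := Finset.card_pos.mp h
  simp only [Finset.mem_filter] at hw
  exact ⟨w, hw.2⟩

lemma not_right_of_rightRem_zero (n : ℕ) (σ : List (Fin n ⊕ Fin (n-1)))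
    (h : rightRem n σ = 0) (w : Fin n ⊕ Fin (n-1)) (hw : w ∉ σ) : ¬ w.isRight = true := by
  intro hR
  unfold rightRem at h
  rw [Finset.card_eq_zero, Finset.eq_empty_iff_forall_notMem] at h
  exact h w (mem_rightRem_filter n σ w hw hR)

lemma bob (n : ℕ) (hn : 3 ≤ n) :
    ∀ k : ℕ, ∀ σ : List (Fin n ⊕ Fin (n-1)), σ.Nodup → σ.length + k = 2*n - 1 →
      2 * rightRem n σ ≤ k →
      (Odd k → 2*n - 1 ≤ gameVal (joinKE n (n-1)) true σ) ∧
      (Even k → 1 ≤ k → 2*n - 1 ≤ gameVal (joinKE n (n-1)) false σ) := by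
  have hcV : Fintype.card (Fin n ⊕ Fin (n-1)) = n + (n-1) := by simp
  intro k
  induction k using Nat.strong_induction_on with
  | _ k ih =>
  intro σ hnd hlen hr
  constructor
  · -- Alice to move, k odd
    intro hodd
    obtain ⟨m, hm⟩ := hodd
    have hk1 : 1 ≤ k := by omega
    have hne := rem_nonempty σ hnd (by rw [hcV]; omega)
    rw [gameVal, dif_pos hne, if_pos rfl]
    apply Finset.le_inf'
    intro v hv
    have hvσ : v.1 ∉ σ := not_mem_of_mem_rem σ v.1 v.2
    have hnd' : (σ ++ [v.1]).Nodup := by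
      simp [List.nodup_append, hnd, hvσ]
      constructor <;> (intro a ha h; rw [h] at ha; exact hvσ ha)
    by_cases hk : k = 1
    · -- terminal move: v.1 is forced and is a left vertex
      subst hk
      rw [gameVal, dif_neg (rem_empty (σ ++ [v.1]) hnd'
        (by rw [hcV]; simp only [List.length_append, List.length_singleton]; omega))]
      have hall : ∀ u, u ≠ v.1 → u ∈ σ :=
        rem_card_eq_one_all σ hnd (by rw [hcV]; omega) v.1 hvσ
      have hleft : v.1.isLeft = true := by
        have hnr := not_right_of_rightRem_zero n σ (by omega) v.1 hvσ
        rcases h' : v.1 with a | b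
        · simp
        · rw [h'] at hnr; simp at hnr
      have hadj : ∀ u, u ≠ v.1 → (joinKE n (n-1)).Adj v.1 u :=
        fun u hu => (⟨Ne.symm hu, Or.inl hleft⟩ : v.1 ≠ u ∧ (v.1.isLeft ∨ u.isLeft))
      have hc := colOrd_ge (joinKE n (n-1)) σ v.1 hall hadj
      rw [hcV] at hc
      omega
    · -- non-terminal: pass to Bob
      have hr' : 2 * rightRem n (σ ++ [v.1]) ≤ k - 1 := by
        have h1 := rightRem_append_le n σ v.1
        omega
      exact (ih (k-1) (by omega) (σ ++ [v.1]) hnd'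
        (by simp only [List.length_append, List.length_singleton]; omega) hr').2
        ⟨m, by omega⟩ (by omega)
  · -- Bob to move, k even, k ≥ 1
    intro hev hk1
    obtain ⟨m, hm⟩ := hev
    have hk2 : 2 ≤ k := by omega
    have hne := rem_nonempty σ hnd (by rw [hcV]; omega)
    rw [gameVal, dif_pos hne, if_neg (by simp)]
    by_cases hr0 : rightRem n σ = 0
    · -- no right vertices left: pick anything
      obtain ⟨w, hw⟩ := hne
      have hwσ : w ∉ σ := not_mem_of_mem_rem σ w hw
      have hnd' : (σ ++ [w]).Nodup := by
        simp [List.nodup_append, hnd, hwσ]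
        constructor <;> (intro a ha h; rw [h] at ha; exact hwσ ha)
      refine le_trans ?_ (Finset.le_sup' _ (Finset.mem_attach _ ⟨w, hw⟩))
      have hr' : 2 * rightRem n (σ ++ [w]) ≤ k - 1 := by
        have h1 := rightRem_append_le n σ w
        omega
      exact (ih (k-1) (by omega) (σ ++ [w]) hnd'
        (by simp only [List.length_append, List.length_singleton]; omega) hr').1
        ⟨m-1, by omega⟩
    · -- pick a right vertex
      obtain ⟨w, hwσ, hwR⟩ := exists_right n σ (Nat.pos_of_ne_zero hr0)
      have hw := mem_rem_filter σ w hwσ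
      have hnd' : (σ ++ [w]).Nodup := by
        simp [List.nodup_append, hnd, hwσ]
        constructor <;> (intro a ha h; rw [h] at ha; exact hwσ ha)
      refine le_trans ?_ (Finset.le_sup' _ (Finset.mem_attach _ ⟨w, hw⟩))
      have hr' : 2 * rightRem n (σ ++ [w]) ≤ k - 1 := by
        have h1 := rightRem_append_lt n σ w hwσ hwR
        omega
      exact (ih (k-1) (by omega) (σ ++ [w]) hnd'
        (by simp only [List.length_append, List.length_singleton]; omega) hr').1
        ⟨m-1, by omega⟩

/-- For every `n ≥ 3`, `gcol(K_n ∨ K̄_{n−1}) = 2n − 1`. -/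
theorem gcol_joinKE_eq (n : ℕ) (hn : 3 ≤ n) :
    gcol (joinKE n (n - 1)) = 2 * n - 1 := by
  have hcV : Fintype.card (Fin n ⊕ Fin (n-1)) = n + (n-1) := by simp
  apply le_antisymm
  · have h := gameVal_le (joinKE n (n-1)) (by rw [hcV]; omega)
      (Fintype.card (Fin n ⊕ Fin (n-1))) [] true
      ((Finset.card_le_univ _).trans_eq Finset.card_univ)
    rw [hcV] at h
    unfold gcol
    omega
  · have hr : 2 * rightRem n [] ≤ 2*n - 1 := by
      have := rightRem_nil_le n hn
      omega
    have h := (bob n hn (2*n - 1) [] (by simp) (by simp) hr).1 ⟨n-1, by omega⟩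
    unfold gcol
    exact h
end

section
/- For every n ≥ 3, gcol(K_n ∨ K̄_{n−1}) = gcol(K_{n−1} ∨ K̄_{n−1}) + 2; that is, deleting one vertex of the complete part of K_n ∨ K̄_{n−1} lowers the game coloring number by exactly 2. -/
open scoped Classical

open Finset in
theorem gameVal_le_inv {V : Type*} [Fintype V] (G : SimpleGraph V) (s : ℕ)
    (I : Bool → List V → Prop)
    (hA : ∀ σ, I true σ → (univ.filter (fun v : V => v ∉ σ)).Nonempty →
        ∃ v ∈ univ.filter (fun v : V => v ∉ σ), I false (σ ++ [v]))
    (hB : ∀ σ, I false σ → ∀ v ∈ univ.filter (fun v : V => v ∉ σ), I true (σ ++ [v]))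
    (hT : ∀ b σ, I b σ → ¬ (univ.filter (fun v : V => v ∉ σ)).Nonempty → colOrd G σ ≤ s)
    (b : Bool) (σ : List V) (hI : I b σ) : gameVal G b σ ≤ s := by
  rw [gameVal]
  by_cases h : (univ.filter (fun v : V => v ∉ σ)).Nonempty
  · rw [dif_pos h]
    cases b with
    | true =>
      obtain ⟨v, hv, hIv⟩ := hA σ hI h
      rw [if_pos rfl]
      refine le_trans (Finset.inf'_le _ (Finset.mem_attach _ ⟨v, hv⟩)) ?_
      exact gameVal_le_inv G s I hA hB hT false (σ ++ [v]) hIv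
    | false =>
      rw [if_neg (by simp)]
      apply Finset.sup'_le
      intro a _
      exact gameVal_le_inv G s I hA hB hT true (σ ++ [a.1]) (hB σ hI a.1 a.2)
  · rw [dif_neg h]
    exact hT b σ hI h
termination_by (univ.filter (fun v : V => v ∉ σ)).card
decreasing_by
  all_goals {
    first
    | (have hvv : (v : V) ∉ σ := (Finset.mem_filter.mp hv).2
       apply Finset.card_lt_card
       constructor
       · intro u hu
         simp only [Finset.mem_filter, List.mem_append] at hu ⊢
         exact ⟨hu.1, fun h' => hu.2 (Or.inl h')⟩
       · intro hsub
         have := hsub (Finset.mem_filter.mpr ⟨Finset.mem_univ _, hvv⟩)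
         simp at this)
    | (have hvv : (a : V) ∉ σ := (Finset.mem_filter.mp a.2).2
       apply Finset.card_lt_card
       constructor
       · intro u hu
         simp only [Finset.mem_filter, List.mem_append] at hu ⊢
         exact ⟨hu.1, fun h' => hu.2 (Or.inl h')⟩
       · intro hsub
         have := hsub (Finset.mem_filter.mpr ⟨Finset.mem_univ _, hvv⟩)
         simp at this) }
open Finset in
theorem le_gameVal_inv {V : Type*} [Fintype V] (G : SimpleGraph V) (s : ℕ)
    (I : Bool → List V → Prop)
    (hA : ∀ σ, I true σ → ∀ v ∈ univ.filter (fun v : V => v ∉ σ), I false (σ ++ [v]))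
    (hB : ∀ σ, I false σ → (univ.filter (fun v : V => v ∉ σ)).Nonempty →
        ∃ v ∈ univ.filter (fun v : V => v ∉ σ), I true (σ ++ [v]))
    (hT : ∀ b σ, I b σ → ¬ (univ.filter (fun v : V => v ∉ σ)).Nonempty → s ≤ colOrd G σ)
    (b : Bool) (σ : List V) (hI : I b σ) : s ≤ gameVal G b σ := by
  rw [gameVal]
  by_cases h : (univ.filter (fun v : V => v ∉ σ)).Nonempty
  · rw [dif_pos h]
    cases b with
    | true =>
      rw [if_pos rfl]
      apply Finset.le_inf'
      intro a _
      exact le_gameVal_inv G s I hA hB hT false (σ ++ [a.1]) (hA σ hI a.1 a.2)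
    | false =>
      obtain ⟨v, hv, hIv⟩ := hB σ hI h
      rw [if_neg (by simp)]
      refine le_trans ?_ (Finset.le_sup' _ (Finset.mem_attach _ ⟨v, hv⟩))
      exact le_gameVal_inv G s I hA hB hT true (σ ++ [v]) hIv
  · rw [dif_neg h]
    exact hT b σ hI h
termination_by (univ.filter (fun v : V => v ∉ σ)).card
decreasing_by
  all_goals {
    first
    | (have hvv : (v : V) ∉ σ := (Finset.mem_filter.mp hv).2
       apply Finset.card_lt_card
       constructor
       · intro u hu
         simp only [Finset.mem_filter, List.mem_append] at hu ⊢
         exact ⟨hu.1, fun h' => hu.2 (Or.inl h')⟩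
       · intro hsub
         have := hsub (Finset.mem_filter.mpr ⟨Finset.mem_univ _, hvv⟩)
         simp at this)
    | (have hvv : (a : V) ∉ σ := (Finset.mem_filter.mp a.2).2
       apply Finset.card_lt_card
       constructor
       · intro u hu
         simp only [Finset.mem_filter, List.mem_append] at hu ⊢
         exact ⟨hu.1, fun h' => hu.2 (Or.inl h')⟩
       · intro hsub
         have := hsub (Finset.mem_filter.mpr ⟨Finset.mem_univ _, hvv⟩)
         simp at this) }
open Finset

section Helpers
variable {V : Type*} [Fintype V] {G : SimpleGraph V}

/-- backDeg of v is at most behind its index. -/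
lemma backDeg_le_index {σ : List V} (hσ : σ.Nodup) (j : Fin σ.length) {v : V}
    (hj : σ.get j = v) : backDeg G σ v ≤ j.val := by
  classical
  have hinj : Function.Injective σ.get := List.nodup_iff_injective_get.mp hσ
  have hsub : (Finset.univ.filter (fun u =>
      G.Adj v u ∧ ∃ i j' : Fin σ.length, i < j' ∧ σ.get i = u ∧ σ.get j' = v)) ⊆
      Finset.univ.image (fun i : Fin j.val => σ.get ⟨i.1, i.2.trans j.2⟩) := by
    intro u hu
    obtain ⟨-, -, i, j', hij, hi, hj'⟩ := Finset.mem_filter.mp hu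
    have : j' = j := hinj (hj'.trans hj.symm)
    subst this
    refine Finset.mem_image.mpr ⟨⟨i.1, hij⟩, Finset.mem_univ _, ?_⟩
    simpa [Fin.ext_iff] using hi
  calc backDeg G σ v ≤ _ := Finset.card_le_card hsub
    _ ≤ (Finset.univ : Finset (Fin j.val)).card := Finset.card_image_le
    _ = j.val := by simp

/-- If v sits at index j and is adjacent to everything before it, backDeg ≥ j. -/
lemma index_le_backDeg {σ : List V} (hσ : σ.Nodup) (j : Fin σ.length) {v : V}
    (hj : σ.get j = v) (hadj : ∀ i : Fin σ.length, i < j → G.Adj v (σ.get i)) :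
    j.val ≤ backDeg G σ v := by
  classical
  have hinj : Function.Injective σ.get := List.nodup_iff_injective_get.mp hσ
  have hsub : Finset.univ.image (fun i : Fin j.val => σ.get ⟨i.1, i.2.trans j.2⟩) ⊆
      (Finset.univ.filter (fun u =>
      G.Adj v u ∧ ∃ i j' : Fin σ.length, i < j' ∧ σ.get i = u ∧ σ.get j' = v)) := by
    intro u hu
    obtain ⟨i, -, rfl⟩ := Finset.mem_image.mp hu
    have hlt : (⟨i.1, i.2.trans j.2⟩ : Fin σ.length) < j := i.2
    exact Finset.mem_filter.mpr ⟨Finset.mem_univ _,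
      hadj _ hlt, ⟨i.1, i.2.trans j.2⟩, j, hlt, rfl, hj⟩
  have hcard : (Finset.univ.image
      (fun i : Fin j.val => σ.get ⟨i.1, i.2.trans j.2⟩)).card = j.val := by
    rw [Finset.card_image_of_injective _ (fun a b hab => ?_), Finset.card_univ,
      Fintype.card_fin]
    have h2 := congrArg Fin.val (hinj hab)
    exact Fin.ext h2
  calc j.val = _ := hcard.symm
    _ ≤ _ := Finset.card_le_card hsub

lemma backDeg_le_nbhd (σ : List V) (v : V) :
    backDeg G σ v ≤ (Finset.univ.filter (fun u => G.Adj v u)).card := by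
  classical
  exact Finset.card_le_card (fun u hu => Finset.mem_filter.mpr
    ⟨Finset.mem_univ _, (Finset.mem_filter.mp hu).2.1⟩)

lemma countP_le_card {σ : List V} (hσ : σ.Nodup) (p : V → Bool) :
    σ.countP p ≤ (Finset.univ.filter (fun v => p v = true)).card := by
  classical
  have h1 : σ.countP p = (σ.filter p).length := List.countP_eq_length_filter
  have h2 : (σ.filter p).toFinset.card = (σ.filter p).length :=
    List.toFinset_card_of_nodup (hσ.filter p)
  rw [h1, ← h2]
  refine Finset.card_le_card fun v hv => ?_
  rw [List.mem_toFinset, List.mem_filter] at hv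
  exact Finset.mem_filter.mpr ⟨Finset.mem_univ _, hv.2⟩

lemma exists_not_mem_of_countP_lt {σ : List V} (p : V → Bool)
    (h : σ.countP p < (Finset.univ.filter (fun v => p v = true)).card) :
    ∃ v, p v = true ∧ v ∉ σ := by
  classical
  by_contra hc
  push_neg at hc
  have : (Finset.univ.filter (fun v => p v = true)).card ≤ σ.countP p := by
    rw [List.countP_eq_length_filter]
    calc (Finset.univ.filter (fun v => p v = true)).card
        ≤ (σ.filter p).toFinset.card := by
          refine Finset.card_le_card fun v hv => ?_
          have hp := (Finset.mem_filter.mp hv).2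
          exact List.mem_toFinset.mpr (List.mem_filter.mpr ⟨hc v hp, hp⟩)
      _ ≤ (σ.filter p).length := (σ.filter p).toFinset_card_le
  omega

lemma not_p_of_countP_eq {σ : List V} (hσ : σ.Nodup) (p : V → Bool)
    (h : σ.countP p = (Finset.univ.filter (fun v => p v = true)).card)
    {v : V} (hv : v ∉ σ) : p v = false := by
  classical
  by_contra hc
  have hp : p v = true := by simpa using hc
  have h2 : (σ.filter p).toFinset.card = σ.countP p := by
    rw [List.toFinset_card_of_nodup (hσ.filter p), List.countP_eq_length_filter]
  have hsub : (σ.filter p).toFinset ⊆ Finset.univ.filter (fun v => p v = true) := by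
    intro u hu
    rw [List.mem_toFinset, List.mem_filter] at hu
    exact Finset.mem_filter.mpr ⟨Finset.mem_univ _, hu.2⟩
  have heq : (σ.filter p).toFinset = Finset.univ.filter (fun v => p v = true) :=
    Finset.eq_of_subset_of_card_le hsub (by omega)
  have : v ∈ (σ.filter p).toFinset := by
    rw [heq]; exact Finset.mem_filter.mpr ⟨Finset.mem_univ _, hp⟩
  rw [List.mem_toFinset, List.mem_filter] at this
  exact hv this.1

end Helpers
section JoinHelpers
open Finset
variable {a b : ℕ}

/-- number of left-part vertices in the list -/
def cntL {a b : ℕ} (σ : List (Fin a ⊕ Fin b)) : ℕ := σ.countP (fun x => Sum.isLeft x)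

/-- number of right-part vertices in the list -/
def cntR {a b : ℕ} (σ : List (Fin a ⊕ Fin b)) : ℕ := σ.countP (fun x => Sum.isRight x)

lemma card_filter_isLeft :
    (Finset.univ.filter (fun x : Fin a ⊕ Fin b => Sum.isLeft x = true)).card = a := by
  classical
  have : (Finset.univ.filter (fun x : Fin a ⊕ Fin b => Sum.isLeft x = true)) =
      Finset.univ.image (Sum.inl : Fin a → Fin a ⊕ Fin b) := by
    ext x
    cases x <;> simp
  rw [this, Finset.card_image_of_injective _ Sum.inl_injective, Finset.card_univ,
    Fintype.card_fin]

lemma card_filter_isRight :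
    (Finset.univ.filter (fun x : Fin a ⊕ Fin b => Sum.isRight x = true)).card = b := by
  classical
  have : (Finset.univ.filter (fun x : Fin a ⊕ Fin b => Sum.isRight x = true)) =
      Finset.univ.image (Sum.inr : Fin b → Fin a ⊕ Fin b) := by
    ext x
    cases x <;> simp
  rw [this, Finset.card_image_of_injective _ Sum.inr_injective, Finset.card_univ,
    Fintype.card_fin]

lemma cnt_sum (σ : List (Fin a ⊕ Fin b)) : cntL σ + cntR σ = σ.length := by
  unfold cntL cntR
  have h := σ.length_eq_countP_add_countP (p := fun x => Sum.isLeft x)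
  rw [h]
  congr 1
  refine List.countP_congr fun x _ => ?_
  cases x <;> simp

lemma cntL_le (σ : List (Fin a ⊕ Fin b)) (hσ : σ.Nodup) : cntL σ ≤ a := by
  have := countP_le_card hσ (fun x : Fin a ⊕ Fin b => Sum.isLeft x)
  rwa [card_filter_isLeft] at this

lemma cntR_le (σ : List (Fin a ⊕ Fin b)) (hσ : σ.Nodup) : cntR σ ≤ b := by
  have := countP_le_card hσ (fun x : Fin a ⊕ Fin b => Sum.isRight x)
  rwa [card_filter_isRight] at this

lemma cntL_concat (σ : List (Fin a ⊕ Fin b)) (v : Fin a ⊕ Fin b) :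
    cntL (σ ++ [v]) = cntL σ + (if Sum.isLeft v then 1 else 0) := by
  unfold cntL
  rw [List.countP_append]
  cases v <;> simp [List.countP_cons]

lemma cntR_concat (σ : List (Fin a ⊕ Fin b)) (v : Fin a ⊕ Fin b) :
    cntR (σ ++ [v]) = cntR σ + (if Sum.isRight v then 1 else 0) := by
  unfold cntR
  rw [List.countP_append]
  cases v <;> simp [List.countP_cons]

lemma exists_left_not_mem {σ : List (Fin a ⊕ Fin b)} (h : cntL σ < a) :
    ∃ v, Sum.isLeft v = true ∧ v ∉ σ := by
  refine exists_not_mem_of_countP_lt (fun x : Fin a ⊕ Fin b => Sum.isLeft x) ?_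
  rwa [card_filter_isLeft]

lemma exists_right_not_mem {σ : List (Fin a ⊕ Fin b)} (h : cntR σ < b) :
    ∃ v, Sum.isRight v = true ∧ v ∉ σ := by
  refine exists_not_mem_of_countP_lt (fun x : Fin a ⊕ Fin b => Sum.isRight x) ?_
  rwa [card_filter_isRight]

lemma left_of_rights_full {σ : List (Fin a ⊕ Fin b)} (hσ : σ.Nodup)
    (h : cntR σ = b) {v : Fin a ⊕ Fin b} (hv : v ∉ σ) : Sum.isLeft v = true := by
  have := not_p_of_countP_eq hσ (fun x : Fin a ⊕ Fin b => Sum.isRight x)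
    (by rwa [card_filter_isRight]) hv
  cases v <;> simp_all

lemma right_of_lefts_full {σ : List (Fin a ⊕ Fin b)} (hσ : σ.Nodup)
    (h : cntL σ = a) {v : Fin a ⊕ Fin b} (hv : v ∉ σ) : Sum.isRight v = true := by
  have := not_p_of_countP_eq hσ (fun x : Fin a ⊕ Fin b => Sum.isLeft x)
    (by rwa [card_filter_isLeft]) hv
  cases v <;> simp_all

lemma joinKE_adj_left {x y : Fin a ⊕ Fin b} (hx : x.isLeft = true) (hxy : x ≠ y) :
    (joinKE a b).Adj x y := ⟨hxy, Or.inl hx⟩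

lemma joinKE_adj_right {x y : Fin a ⊕ Fin b} (hx : x.isRight = true)
    (h : (joinKE a b).Adj x y) : y.isLeft = true := by
  rcases h.2 with h' | h'
  · cases x <;> simp_all
  · exact h'

lemma mem_of_terminal {V : Type*} [Fintype V] {σ : List V}
    (h : ¬ (Finset.univ.filter (fun v : V => v ∉ σ)).Nonempty) (v : V) : v ∈ σ := by
  classical
  by_contra hv
  exact h ⟨v, Finset.mem_filter.mpr ⟨Finset.mem_univ _, hv⟩⟩

lemma length_of_terminal {V : Type*} [Fintype V] {σ : List V}
    (hσ : σ.Nodup) (h : ∀ v : V, v ∈ σ) : σ.length = Fintype.card V := by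
  classical
  rw [← List.toFinset_card_of_nodup hσ]
  rw [show σ.toFinset = Finset.univ from Finset.eq_univ_iff_forall.mpr
    (fun v => List.mem_toFinset.mpr (h v))]
  exact Finset.card_univ

end JoinHelpers
section CntConcat
variable {a b : ℕ}

lemma cntL_concat_left {σ : List (Fin a ⊕ Fin b)} {v : Fin a ⊕ Fin b}
    (hv : v.isLeft = true) : cntL (σ ++ [v]) = cntL σ + 1 := by
  rw [cntL_concat, hv, if_pos rfl]

lemma cntL_concat_right {σ : List (Fin a ⊕ Fin b)} {v : Fin a ⊕ Fin b}
    (hv : v.isLeft = false) : cntL (σ ++ [v]) = cntL σ := by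
  rw [cntL_concat, hv]; simp

lemma cntR_concat_left {σ : List (Fin a ⊕ Fin b)} {v : Fin a ⊕ Fin b}
    (hv : v.isLeft = true) : cntR (σ ++ [v]) = cntR σ := by
  have hv' : v.isRight = false := by cases v <;> simp_all
  rw [cntR_concat, hv']; simp

lemma cntR_concat_right {σ : List (Fin a ⊕ Fin b)} {v : Fin a ⊕ Fin b}
    (hv : v.isLeft = false) : cntR (σ ++ [v]) = cntR σ + 1 := by
  have hv' : v.isRight = true := by cases v <;> simp_all
  rw [cntR_concat, hv', if_pos rfl]

lemma cntL_concat_le (σ : List (Fin a ⊕ Fin b)) (v : Fin a ⊕ Fin b) :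
    cntL σ ≤ cntL (σ ++ [v]) ∧ cntL (σ ++ [v]) ≤ cntL σ + 1 := by
  rw [cntL_concat]; split_ifs <;> omega

end CntConcat
section Glue
variable {V : Type*} [Fintype V]

lemma nodup_concat_s11 {σ : List V} {v : V} (hσ : σ.Nodup) (hv : v ∉ σ) :
    (σ ++ [v]).Nodup := by
  simp [List.nodup_append, hσ, hv]
  exact fun a ha hav => hv (hav ▸ ha)

lemma length_lt_of_unchosen {σ : List V} (hσ : σ.Nodup) {v : V} (hv : v ∉ σ) :
    σ.length < Fintype.card V := by
  classical
  rw [← List.toFinset_card_of_nodup hσ, ← Finset.card_univ]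
  exact Finset.card_lt_card ⟨Finset.subset_univ _,
    fun hsub => hv (List.mem_toFinset.mp (hsub (Finset.mem_univ v)))⟩

lemma get_concat_self {σ : List V} {v : V} {j : Fin (σ ++ [v]).length}
    (hj : j.val = σ.length) : (σ ++ [v]).get j = v := by
  rw [List.get_eq_getElem]
  exact List.getElem_concat_length hj _

lemma get_concat_lt {σ : List V} {v : V} {j : Fin (σ ++ [v]).length}
    (hj : j.val < σ.length) : (σ ++ [v]).get j = σ.get ⟨j.val, hj⟩ := by
  rw [List.get_eq_getElem, List.get_eq_getElem]
  exact List.getElem_append_left hj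

lemma gcol_le_card (G : SimpleGraph V) : gcol G ≤ Fintype.card V := by
  classical
  refine gameVal_le_inv G (Fintype.card V) (fun _ σ => σ.Nodup) ?_ ?_ ?_ true [] List.nodup_nil
  · intro σ hσ h
    obtain ⟨v, hv⟩ := h
    exact ⟨v, hv, nodup_concat_s11 hσ (Finset.mem_filter.mp hv).2⟩
  · intro σ hσ v hv
    exact nodup_concat_s11 hσ (Finset.mem_filter.mp hv).2
  · intro b σ hσ h
    have hmem : ∀ v : V, v ∈ σ := mem_of_terminal h
    have hlen : σ.length = Fintype.card V := length_of_terminal hσ hmem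
    refine Finset.sup_le fun v _ => ?_
    obtain ⟨j, hj⟩ := List.mem_iff_get.mp (hmem v)
    have := backDeg_le_index (G := G) hσ j hj
    have := j.isLt
    omega

end Glue
section MainA
open Finset

/-- Bob's invariant for the lower bound on `joinKE (m+1) m`. -/
def invA (m : ℕ) (b : Bool) (σ : List (Fin (m+1) ⊕ Fin m)) : Prop :=
  σ.Nodup ∧ (b = true ↔ Even σ.length) ∧
  (σ.length ≤ 2*m → (cntL σ ≤ (σ.length+1)/2 ∨ cntR σ = m)) ∧
  (σ.length = 2*m+1 → ∃ j : Fin σ.length, (σ.get j).isLeft = true ∧ j.val = 2*m)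

lemma lowerA (m : ℕ) (hm : 1 ≤ m) : 2*m+1 ≤ gcol (joinKE (m+1) m) := by
  classical
  have hcard : Fintype.card (Fin (m+1) ⊕ Fin m) = 2*m+1 := by
    simp only [Fintype.card_sum, Fintype.card_fin]; omega
  refine le_gameVal_inv (joinKE (m+1) m) (2*m+1) (invA m) ?hA ?hB ?hT true [] ?hI0
  case hI0 =>
    refine ⟨List.nodup_nil, by simp, by simp [cntL], by simp⟩
  case hA =>
    rintro σ ⟨hnd, hpar, h3, h4⟩ v hv
    have hvn : v ∉ σ := by
      have h' := hv
      simp only [Finset.mem_filter] at h'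
      exact h'.2
    obtain ⟨t2, ht2⟩ : Even σ.length := hpar.mp rfl
    have hlt : σ.length < 2*m+1 := hcard ▸ length_lt_of_unchosen hnd hvn
    have hRle := cntR_le σ hnd
    have hsum := cnt_sum σ
    have hlen' : (σ ++ [v]).length = σ.length + 1 := by simp
    refine ⟨nodup_concat_s11 hnd hvn, by
        rw [hlen']
        simp [Nat.even_add_one]
        exact ⟨t2, ht2⟩, ?_, ?_⟩
    · -- clause 3 at length+1
      intro hlen
      rw [hlen'] at hlen
      rcases h3 (by omega) with hL | hR
      · left
        have := cntL_concat_le σ v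
        rw [hlen']
        omega
      · right
        have hvl : v.isLeft = true := left_of_rights_full hnd hR hvn
        rw [cntR_concat_left hvl]
        exact hR
    · -- clause 4 : length+1 = 2m+1
      intro hlen
      rw [hlen'] at hlen
      have hlσ : σ.length = 2*m := by omega
      have hR : cntR σ = m := by
        rcases h3 (by omega) with hL | hR
        · omega
        · exact hR
      have hvl : v.isLeft = true := left_of_rights_full hnd hR hvn
      refine ⟨⟨2*m, by omega⟩, ?_, rfl⟩
      rw [get_concat_self (by simpa using hlσ.symm)]
      exact hvl
  case hB =>
    rintro σ ⟨hnd, hpar, h3, h4⟩ h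
    have hOd : ¬ Even σ.length := fun he => by simpa using hpar.mpr he
    have hRle := cntR_le σ hnd
    have hsum := cnt_sum σ
    by_cases hr : cntR σ < m
    · -- pick an unplaced right vertex
      obtain ⟨v, hvr, hvn⟩ := exists_right_not_mem hr
      have hvl : v.isLeft = false := by cases v <;> simp_all
      have hlen' : (σ ++ [v]).length = σ.length + 1 := by simp
      refine ⟨v, by simp only [Finset.mem_filter]; exact ⟨Finset.mem_univ _, hvn⟩,
        nodup_concat_s11 hnd hvn, by
          rw [hlen']
          simp [Nat.even_add_one, hOd], ?_, ?_⟩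
      · intro hlen
        rw [hlen'] at hlen
        rcases h3 (by omega) with hL | hR
        · left
          rw [hlen', cntL_concat_right hvl]
          obtain ⟨t2, ht2⟩ := Nat.not_even_iff_odd.mp hOd
          omega
        · omega
      · intro hlen
        rw [hlen'] at hlen
        exact absurd ⟨m, by omega⟩ hOd
    · -- all rights placed; pick any unchosen vertex
      obtain ⟨v, hv⟩ := h
      have hvn : v ∉ σ := by
        have h' := hv
        simp only [Finset.mem_filter] at h'
        exact h'.2
      have hR : cntR σ = m := by omega
      have hvl : v.isLeft = true := left_of_rights_full hnd hR hvn
      have hlen' : (σ ++ [v]).length = σ.length + 1 := by simp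
      refine ⟨v, hv, nodup_concat_s11 hnd hvn, by
          rw [hlen']
          simp [Nat.even_add_one, hOd], ?_, ?_⟩
      · intro _
        right
        rw [cntR_concat_left hvl]
        exact hR
      · intro hlen
        rw [hlen'] at hlen
        exact absurd ⟨m, by omega⟩ hOd
  case hT =>
    rintro b σ ⟨hnd, hpar, h3, h4⟩ h
    have hmem := mem_of_terminal h
    have hlen : σ.length = 2*m+1 := by rw [length_of_terminal hnd hmem, hcard]
    obtain ⟨j, hjl, hjv⟩ := h4 hlen
    have hadj : ∀ i : Fin σ.length, i < j →
        (joinKE (m+1) m).Adj (σ.get j) (σ.get i) := by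
      intro i hij
      refine joinKE_adj_left hjl ?_
      intro he
      have h1 := List.nodup_iff_injective_get.mp hnd he.symm
      have h2 := congrArg Fin.val h1
      have h3' : i.val < j.val := hij
      omega
    have hbd := index_le_backDeg (G := joinKE (m+1) m) hnd j rfl hadj
    have hle : 1 + backDeg (joinKE (m+1) m) σ (σ.get j) ≤
        colOrd (joinKE (m+1) m) σ := by
      unfold colOrd
      exact Finset.le_sup (f := fun v => 1 + backDeg (joinKE (m+1) m) σ v)
        (Finset.mem_univ _)
    omega

end MainA
section MainB
open Finset

/-- Alice's invariant for the upper bound on `joinKE (k+2) (k+2)`. -/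
def invB (k : ℕ) (b : Bool) (σ : List (Fin (k+2) ⊕ Fin (k+2))) : Prop :=
  σ.Nodup ∧ (b = true ↔ Even σ.length) ∧
  (σ.length ≤ 2*k+3 → ((σ.length+1)/2 ≤ cntL σ ∨ cntL σ = k+2)) ∧
  (σ.length = 2*k+4 → ∃ j : Fin σ.length, (σ.get j).isRight = true ∧ j.val = 2*k+3)

lemma upperB (k : ℕ) : gcol (joinKE (k+2) (k+2)) ≤ 2*k+3 := by
  classical
  have hcard : Fintype.card (Fin (k+2) ⊕ Fin (k+2)) = 2*k+4 := by
    simp only [Fintype.card_sum, Fintype.card_fin]; omega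
  refine gameVal_le_inv (joinKE (k+2) (k+2)) (2*k+3) (invB k) ?hA ?hB ?hT true [] ?hI0
  case hI0 =>
    refine ⟨List.nodup_nil, by simp, by simp, by simp⟩
  case hA =>
    rintro σ ⟨hnd, hpar, h3, h4⟩ h
    obtain ⟨t2, ht2⟩ : Even σ.length := hpar.mp rfl
    obtain ⟨w, hw⟩ := h
    have hwn : w ∉ σ := by
      have h' := hw
      simp only [Finset.mem_filter] at h'
      exact h'.2
    have hlt : σ.length < 2*k+4 := hcard ▸ length_lt_of_unchosen hnd hwn
    have hLle := cntL_le σ hnd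
    have hsum := cnt_sum σ
    by_cases hl : cntL σ < k+2
    · obtain ⟨v, hvl, hvn⟩ := exists_left_not_mem hl
      have hlen' : (σ ++ [v]).length = σ.length + 1 := by simp
      have hL : (σ.length+1)/2 ≤ cntL σ := by
        rcases h3 (by omega) with hL | hL
        · exact hL
        · omega
      refine ⟨v, by simp only [Finset.mem_filter]; exact ⟨Finset.mem_univ _, hvn⟩,
        nodup_concat_s11 hnd hvn, by
          rw [hlen']
          simp [Nat.even_add_one]
          exact ⟨t2, ht2⟩, ?_, ?_⟩
      · intro hlen
        rw [hlen'] at hlen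
        left
        rw [hlen', cntL_concat_left hvl]
        omega
      · intro hlen
        rw [hlen'] at hlen
        exfalso
        omega
    · have hL : cntL σ = k+2 := by omega
      have hvl : (w : Fin (k+2) ⊕ Fin (k+2)).isRight = true :=
        right_of_lefts_full hnd hL hwn
      have hvl' : (w : Fin (k+2) ⊕ Fin (k+2)).isLeft = false := by
        cases w <;> simp_all
      have hlen' : (σ ++ [w]).length = σ.length + 1 := by simp
      refine ⟨w, hw, nodup_concat_s11 hnd hwn, by
          rw [hlen']
          simp [Nat.even_add_one]
          exact ⟨t2, ht2⟩, ?_, ?_⟩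
      · intro hlen
        right
        rw [cntL_concat_right hvl']
        exact hL
      · intro hlen
        rw [hlen'] at hlen
        exfalso
        omega
  case hB =>
    rintro σ ⟨hnd, hpar, h3, h4⟩ v hv
    have hvn : v ∉ σ := by
      have h' := hv
      simp only [Finset.mem_filter] at h'
      exact h'.2
    have hOd : ¬ Even σ.length := fun he => by simpa using hpar.mpr he
    obtain ⟨t2, ht2⟩ := Nat.not_even_iff_odd.mp hOd
    have hlt : σ.length < 2*k+4 := hcard ▸ length_lt_of_unchosen hnd hvn
    have hLle := cntL_le σ hnd
    have hsum := cnt_sum σ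
    have hlen' : (σ ++ [v]).length = σ.length + 1 := by simp
    refine ⟨nodup_concat_s11 hnd hvn, by
        rw [hlen']
        simp [Nat.even_add_one, hOd], ?_, ?_⟩
    · intro hlen
      rw [hlen'] at hlen
      rcases h3 (by omega) with hL | hL
      · left
        have := cntL_concat_le σ v
        rw [hlen']
        omega
      · right
        have hvr : v.isLeft = false := by
          have := right_of_lefts_full hnd hL hvn
          cases v <;> simp_all
        rw [cntL_concat_right hvr]
        exact hL
    · intro hlen
      rw [hlen'] at hlen
      have hlσ : σ.length = 2*k+3 := by omega
      have hL : cntL σ = k+2 := by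
        rcases h3 (by omega) with hL | hL
        · omega
        · exact hL
      have hvr : v.isRight = true := right_of_lefts_full hnd hL hvn
      refine ⟨⟨2*k+3, by omega⟩, ?_, rfl⟩
      rw [get_concat_self (by simpa using hlσ.symm)]
      exact hvr
  case hT =>
    rintro b σ ⟨hnd, hpar, h3, h4⟩ h
    have hmem := mem_of_terminal h
    have hlen : σ.length = 2*k+4 := by rw [length_of_terminal hnd hmem, hcard]
    obtain ⟨j0, hj0r, hj0v⟩ := h4 hlen
    unfold colOrd
    refine Finset.sup_le fun v _ => ?_
    obtain ⟨j, hj⟩ := List.mem_iff_get.mp (hmem v)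
    have hbd := backDeg_le_index (G := joinKE (k+2) (k+2)) hnd j hj
    by_cases hjtop : j.val = 2*k+3
    · have : j = j0 := Fin.ext (by omega)
      subst this
      have hvr : v.isRight = true := hj ▸ hj0r
      have hsub : (Finset.univ.filter (fun u => (joinKE (k+2) (k+2)).Adj v u)) ⊆
          (Finset.univ.filter (fun x : Fin (k+2) ⊕ Fin (k+2) => Sum.isLeft x = true)) := by
        intro u hu
        simp only [Finset.mem_filter] at hu ⊢
        exact ⟨Finset.mem_univ _, joinKE_adj_right hvr hu.2⟩
      have hbd2 := backDeg_le_nbhd (G := joinKE (k+2) (k+2)) σ v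
      have hc := Finset.card_le_card hsub
      rw [card_filter_isLeft] at hc
      omega
    · have := j.isLt
      omega

end MainB
section MainB2
open Finset

/-- Bob's invariant for the lower bound on `joinKE (k+2) (k+2)`. -/
def invC (k : ℕ) (b : Bool) (σ : List (Fin (k+2) ⊕ Fin (k+2))) : Prop :=
  σ.Nodup ∧ (b = true ↔ Even σ.length) ∧
  (σ.length ≤ 2*k+2 → (cntL σ ≤ (σ.length+1)/2 ∨ cntR σ = k+2)) ∧
  (σ.length = 2*k+3 → ((∃ v : Fin (k+2) ⊕ Fin (k+2), v.isLeft = true ∧ v ∉ σ) ∨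
    ∃ j : Fin σ.length, (σ.get j).isLeft = true ∧ 2*k+2 ≤ j.val)) ∧
  (σ.length = 2*k+4 → ∃ j : Fin σ.length, (σ.get j).isLeft = true ∧ 2*k+2 ≤ j.val)

lemma lowerB (k : ℕ) : 2*k+3 ≤ gcol (joinKE (k+2) (k+2)) := by
  classical
  have hcard : Fintype.card (Fin (k+2) ⊕ Fin (k+2)) = 2*k+4 := by
    simp only [Fintype.card_sum, Fintype.card_fin]; omega
  refine le_gameVal_inv (joinKE (k+2) (k+2)) (2*k+3) (invC k) ?hA ?hB ?hT true [] ?hI0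
  case hI0 =>
    refine ⟨List.nodup_nil, by simp, by simp [cntL], by simp, by simp⟩
  case hA =>
    rintro σ ⟨hnd, hpar, h3, h4, h5⟩ v hv
    have hvn : v ∉ σ := by
      have h' := hv
      simp only [Finset.mem_filter] at h'
      exact h'.2
    obtain ⟨t2, ht2⟩ : Even σ.length := hpar.mp rfl
    have hlt : σ.length < 2*k+4 := hcard ▸ length_lt_of_unchosen hnd hvn
    have hRle := cntR_le σ hnd
    have hLle := cntL_le σ hnd
    have hsum := cnt_sum σ
    have hlen' : (σ ++ [v]).length = σ.length + 1 := by simp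
    refine ⟨nodup_concat_s11 hnd hvn, by
        rw [hlen']
        simp [Nat.even_add_one]
        exact ⟨t2, ht2⟩, ?_, ?_, ?_⟩
    · -- clause 3
      intro hlen
      rw [hlen'] at hlen
      rcases h3 (by omega) with hL | hR
      · left
        have := cntL_concat_le σ v
        rw [hlen']
        omega
      · right
        have hvl : v.isLeft = true := left_of_rights_full hnd hR hvn
        rw [cntR_concat_left hvl]
        exact hR
    · -- clause 4 : length+1 = 2k+3
      intro hlen
      rw [hlen'] at hlen
      have hlσ : σ.length = 2*k+2 := by omega
      have hLlt : cntL σ < k+2 := by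
        rcases h3 (by omega) with hL | hR
        · omega
        · omega
      obtain ⟨u, hul, hun⟩ := exists_left_not_mem hLlt
      by_cases huv : u = v
      · right
        refine ⟨⟨2*k+2, by omega⟩, ?_, by simp⟩
        rw [get_concat_self (by simpa using hlσ.symm)]
        exact huv ▸ hul
      · left
        refine ⟨u, hul, ?_⟩
        simp only [List.mem_append, List.mem_singleton]
        rintro (h' | h')
        · exact hun h'
        · exact huv h'
    · -- clause 5 impossible by parity
      intro hlen
      rw [hlen'] at hlen
      exfalso
      omega
  case hB =>
    rintro σ ⟨hnd, hpar, h3, h4, h5⟩ h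
    have hOd : ¬ Even σ.length := fun he => by simpa using hpar.mpr he
    obtain ⟨t2, ht2⟩ := Nat.not_even_iff_odd.mp hOd
    obtain ⟨w, hw⟩ := h
    have hwn : w ∉ σ := by
      have h' := hw
      simp only [Finset.mem_filter] at h'
      exact h'.2
    have hlt : σ.length < 2*k+4 := hcard ▸ length_lt_of_unchosen hnd hwn
    have hRle := cntR_le σ hnd
    have hsum := cnt_sum σ
    by_cases hltop : σ.length = 2*k+3
    · -- final Bob move
      rcases h4 hltop with ⟨u, hul, hun⟩ | ⟨j, hjl, hjv⟩
      · refine ⟨u, by simp only [Finset.mem_filter]; exact ⟨Finset.mem_univ _, hun⟩,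
          nodup_concat_s11 hnd hun, by
            have : (σ ++ [u]).length = σ.length + 1 := by simp
            rw [this]
            simp [Nat.even_add_one, hOd], ?_, ?_, ?_⟩
        · intro hlen
          simp only [List.length_append, List.length_singleton] at hlen
          exfalso
          omega
        · intro hlen
          simp only [List.length_append, List.length_singleton] at hlen
          exfalso
          omega
        · intro hlen
          refine ⟨⟨2*k+3, by simp [hltop]⟩, ?_, by simp⟩
          rw [get_concat_self (by simpa using hltop.symm)]
          exact hul
      · refine ⟨w, hw, nodup_concat_s11 hnd hwn, by
            have : (σ ++ [w]).length = σ.length + 1 := by simp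
            rw [this]
            simp [Nat.even_add_one, hOd], ?_, ?_, ?_⟩
        · intro hlen
          simp only [List.length_append, List.length_singleton] at hlen
          exfalso
          omega
        · intro hlen
          simp only [List.length_append, List.length_singleton] at hlen
          exfalso
          omega
        · intro hlen
          have hjlt : j.val < σ.length := j.isLt
          refine ⟨⟨j.val, by simp only [List.length_append, List.length_singleton]; omega⟩,
            ?_, hjv⟩
          rw [get_concat_lt (by simpa using hjlt)]
          have : (⟨j.val, hjlt⟩ : Fin σ.length) = j := Fin.ext rfl
          rw [this]
          exact hjl
    · -- ordinary Bob move
      have hl3 : σ.length ≤ 2*k+1 := by omega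
      by_cases hr : cntR σ < k+2
      · obtain ⟨v, hvr, hvn⟩ := exists_right_not_mem hr
        have hvl : v.isLeft = false := by cases v <;> simp_all
        have hlen' : (σ ++ [v]).length = σ.length + 1 := by simp
        refine ⟨v, by simp only [Finset.mem_filter]; exact ⟨Finset.mem_univ _, hvn⟩,
          nodup_concat_s11 hnd hvn, by
            rw [hlen']
            simp [Nat.even_add_one, hOd], ?_, ?_, ?_⟩
        · intro hlen
          rw [hlen'] at hlen
          rcases h3 (by omega) with hL | hR
          · left
            rw [hlen', cntL_concat_right hvl]
            omega
          · omega
        · intro hlen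
          rw [hlen'] at hlen
          exfalso
          omega
        · intro hlen
          rw [hlen'] at hlen
          exfalso
          omega
      · have hR : cntR σ = k+2 := by omega
        have hvl : (w : Fin (k+2) ⊕ Fin (k+2)).isLeft = true :=
          left_of_rights_full hnd hR hwn
        have hlen' : (σ ++ [w]).length = σ.length + 1 := by simp
        refine ⟨w, hw, nodup_concat_s11 hnd hwn, by
            rw [hlen']
            simp [Nat.even_add_one, hOd], ?_, ?_, ?_⟩
        · intro hlen
          right
          rw [cntR_concat_left hvl]
          exact hR
        · intro hlen
          rw [hlen'] at hlen
          exfalso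
          omega
        · intro hlen
          rw [hlen'] at hlen
          exfalso
          omega
  case hT =>
    rintro b σ ⟨hnd, hpar, h3, h4, h5⟩ h
    have hmem := mem_of_terminal h
    have hlen : σ.length = 2*k+4 := by rw [length_of_terminal hnd hmem, hcard]
    obtain ⟨j, hjl, hjv⟩ := h5 hlen
    have hadj : ∀ i : Fin σ.length, i < j →
        (joinKE (k+2) (k+2)).Adj (σ.get j) (σ.get i) := by
      intro i hij
      refine joinKE_adj_left hjl ?_
      intro he
      have h1 := List.nodup_iff_injective_get.mp hnd he.symm
      have h2 := congrArg Fin.val h1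
      have h3' : i.val < j.val := hij
      omega
    have hbd := index_le_backDeg (G := joinKE (k+2) (k+2)) hnd j rfl hadj
    have hle : 1 + backDeg (joinKE (k+2) (k+2)) σ (σ.get j) ≤
        colOrd (joinKE (k+2) (k+2)) σ := by
      unfold colOrd
      exact Finset.le_sup (f := fun v => 1 + backDeg (joinKE (k+2) (k+2)) σ v)
        (Finset.mem_univ _)
    omega

end MainB2
/-- For every `n ≥ 3`,
`gcol(K_n ∨ K̄_{n−1}) = gcol(K_{n−1} ∨ K̄_{n−1}) + 2`: deleting one vertex of
the complete part lowers the game coloring number by exactly 2. -/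
theorem gcol_joinKE_succ (n : ℕ) (hn : 3 ≤ n) :
    gcol (joinKE n (n - 1)) = gcol (joinKE (n - 1) (n - 1)) + 2 := by
  obtain ⟨k, rfl⟩ : ∃ k, n = k + 3 := ⟨n - 3, by omega⟩
  rw [show k + 3 - 1 = k + 2 from rfl]
  have hA_le : gcol (joinKE (k+3) (k+2)) ≤ 2*k+5 := by
    have h := gcol_le_card (joinKE (k+3) (k+2))
    have hc : Fintype.card (Fin (k+3) ⊕ Fin (k+2)) = 2*k+5 := by
      simp only [Fintype.card_sum, Fintype.card_fin]; omega
    omega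
  have hA_ge : 2*(k+2)+1 ≤ gcol (joinKE ((k+2)+1) (k+2)) := lowerA (k+2) (by omega)
  have hB_le : gcol (joinKE (k+2) (k+2)) ≤ 2*k+3 := upperB k
  have hB_ge : 2*k+3 ≤ gcol (joinKE (k+2) (k+2)) := lowerB k
  have he : joinKE ((k+2)+1) (k+2) = joinKE (k+3) (k+2) := rfl
  rw [he] at hA_ge
  omega
end

section
/- Let G be a finite simple graph. The value of the Alice-skip ordering game on G equals gcol(G); in particular, Alice cannot guarantee a score smaller than gcol(G) by skipping any number of her turns. -/
open scoped Classical

/-- The minimax value of the Alice-skip ordering game on `G` from position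
`σ`: played like the ordering game, except that on any of her turns Alice may
pass (order no vertex) instead of choosing a vertex, after which it is Bob's
turn.  Alice minimizes and Bob maximizes the final score `colOrd G τ`. -/
noncomputable def gameValAliceSkip {V : Type*} [Fintype V] (G : SimpleGraph V)
    (alice : Bool) (σ : List V) : ℕ :=
  if h : (Finset.univ.filter (fun v : V => v ∉ σ)).Nonempty then
    if alice then
      min (gameValAliceSkip G false σ)
        ((Finset.univ.filter (fun v : V => v ∉ σ)).attach.inf'
          (Finset.attach_nonempty_iff.mpr h)
          (fun v => gameValAliceSkip G false (σ ++ [v.1])))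
    else
      (Finset.univ.filter (fun v : V => v ∉ σ)).attach.sup'
        (Finset.attach_nonempty_iff.mpr h)
        (fun v => gameValAliceSkip G true (σ ++ [v.1]))
  else colOrd G σ
termination_by ((Finset.univ.filter (fun v : V => v ∉ σ)).card, if alice then 1 else 0)
decreasing_by
  · apply Prod.Lex.right' <;> simp_all
  all_goals {
    apply Prod.Lex.left
    have hv : ↑v ∉ σ := (Finset.mem_filter.mp v.2).2
    apply Finset.card_lt_card
    constructor
    · intro u hu
      simp only [Finset.mem_filter, List.mem_append] at hu ⊢
      exact ⟨hu.1, fun h' => hu.2 (Or.inl h')⟩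
    · intro hsub
      have := hsub (Finset.mem_filter.mpr ⟨Finset.mem_univ _, hv⟩)
      simp at this }


section AliceSkipAux

open Finset

variable {V : Type*} [Fintype V] (G : SimpleGraph V)

/-- The immediate cost of placing `v` when the set `S` is already placed. -/
noncomputable def gcost (S : Finset V) (v : V) : ℕ :=
  1 + (Finset.univ.filter (fun u => G.Adj v u ∧ u ∈ S)).card

/-- The final (worst-case) cost of `v`. -/
noncomputable def Mv (v : V) : ℕ := gcost G (Finset.univ.erase v) v

/-- The "future" part of the game value, as a function of the placed set. -/
noncomputable def FV (b : Bool) (S : Finset V) : ℕ :=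
  if h : (Finset.univ.filter (fun v : V => v ∉ S)).Nonempty then
    if b then
      (Finset.univ.filter (fun v : V => v ∉ S)).attach.inf'
        (Finset.attach_nonempty_iff.mpr h)
        (fun v => max (gcost G S v.1) (FV false (insert v.1 S)))
    else
      (Finset.univ.filter (fun v : V => v ∉ S)).attach.sup'
        (Finset.attach_nonempty_iff.mpr h)
        (fun v => max (gcost G S v.1) (FV true (insert v.1 S)))
  else 0
termination_by (Finset.univ.filter (fun v : V => v ∉ S)).card
decreasing_by
  all_goals {
    have hv : ↑v ∉ S := (Finset.mem_filter.mp v.2).2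
    apply Finset.card_lt_card
    constructor
    · intro u hu
      simp only [Finset.mem_filter, Finset.mem_insert] at hu ⊢
      exact ⟨hu.1, fun h' => hu.2 (Or.inr h')⟩
    · intro hsub
      have := hsub (Finset.mem_filter.mpr ⟨Finset.mem_univ _, hv⟩)
      simp at this }

variable {G}

lemma gcost_mono {S S' : Finset V} (h : S ⊆ S') (v : V) :
    gcost G S v ≤ gcost G S' v := by
  unfold gcost
  have : (Finset.univ.filter (fun u => G.Adj v u ∧ u ∈ S)) ⊆
      (Finset.univ.filter (fun u => G.Adj v u ∧ u ∈ S')) := by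
    intro u hu
    simp only [Finset.mem_filter] at hu ⊢
    exact ⟨hu.1, hu.2.1, h hu.2.2⟩
  exact Nat.add_le_add_left (Finset.card_le_card this) 1

lemma gcost_le_Mv {S : Finset V} {v : V} (h : v ∉ S) :
    gcost G S v ≤ Mv G v := by
  apply gcost_mono
  intro u hu
  exact Finset.mem_erase.mpr ⟨fun he => h (he ▸ hu), Finset.mem_univ u⟩

lemma rem_nonempty_iff (S : Finset V) :
    (Finset.univ.filter (fun v : V => v ∉ S)).Nonempty ↔ S ≠ Finset.univ := by
  constructor
  · rintro ⟨v, hv⟩ rfl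
    simp at hv
  · intro h
    by_contra hne
    refine h (Finset.eq_univ_iff_forall.mpr fun v => ?_)
    by_contra hv
    exact hne ⟨v, Finset.mem_filter.mpr ⟨Finset.mem_univ _, hv⟩⟩

lemma FV_univ (b : Bool) : FV G b (Finset.univ : Finset V) = 0 := by
  rw [FV]
  rw [dif_neg]
  intro h
  rw [rem_nonempty_iff] at h
  exact h rfl

lemma ne_univ_of_lt_FV {lam : ℕ} {b : Bool} {S : Finset V} (h : lam < FV G b S) :
    S ≠ Finset.univ := by
  rintro rfl
  rw [FV_univ] at h
  exact Nat.not_lt_zero _ h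

lemma lt_FV_true_iff {lam : ℕ} {S : Finset V} (h : S ≠ Finset.univ) :
    lam < FV G true S ↔
      ∀ v ∉ S, lam < max (gcost G S v) (FV G false (insert v S)) := by
  have hne := (rem_nonempty_iff S).mpr h
  rw [FV, dif_pos hne, if_pos rfl, Finset.lt_inf'_iff]
  constructor
  · intro H v hv
    exact H ⟨v, Finset.mem_filter.mpr ⟨Finset.mem_univ _, hv⟩⟩ (Finset.mem_attach _ _)
  · intro H v _
    exact H v.1 (Finset.mem_filter.mp v.2).2

lemma lt_FV_false_iff {lam : ℕ} {S : Finset V} (h : S ≠ Finset.univ) :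
    lam < FV G false S ↔
      ∃ v, v ∉ S ∧ lam < max (gcost G S v) (FV G true (insert v S)) := by
  have hne := (rem_nonempty_iff S).mpr h
  rw [FV, dif_pos hne, if_neg (by simp), Finset.lt_sup'_iff]
  constructor
  · rintro ⟨v, -, hv⟩
    exact ⟨v.1, (Finset.mem_filter.mp v.2).2, hv⟩
  · rintro ⟨v, hv, hlt⟩
    exact ⟨⟨v, Finset.mem_filter.mpr ⟨Finset.mem_univ _, hv⟩⟩, Finset.mem_attach _ _, hlt⟩

lemma rem_insert_lt {S : Finset V} {v : V} (hv : v ∉ S) :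
    (Finset.univ.filter (fun u : V => u ∉ insert v S)).card <
      (Finset.univ.filter (fun u : V => u ∉ S)).card := by
  apply Finset.card_lt_card
  constructor
  · intro u hu
    simp only [Finset.mem_filter, Finset.mem_insert] at hu ⊢
    exact ⟨hu.1, fun h' => hu.2 (Or.inr h')⟩
  · intro hsub
    have := hsub (Finset.mem_filter.mpr ⟨Finset.mem_univ _, hv⟩)
    simp at this

lemma eq_erase_of_insert_eq_univ {S : Finset V} {v : V} (hv : v ∉ S)
    (h : insert v S = Finset.univ) : S = Finset.univ.erase v := by
  ext u
  simp only [Finset.mem_erase, Finset.mem_univ, and_true]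
  constructor
  · intro hu he
    exact hv (he ▸ hu)
  · intro hu
    have : u ∈ insert v S := h ▸ Finset.mem_univ u
    rcases Finset.mem_insert.mp this with he | hS
    · exact absurd he hu
    · exact hS

/-- If every unplaced vertex has final cost exceeding `lam`, then both game
values exceed `lam` (the last-placed vertex is charged its final cost). -/
lemma lemE (lam : ℕ) : ∀ n (S : Finset V) (b : Bool),
    (Finset.univ.filter (fun v : V => v ∉ S)).card = n →
    S ≠ Finset.univ → (∀ z ∉ S, lam < Mv G z) → lam < FV G b S := by
  intro n
  induction n using Nat.strong_induction_on with
  | _ n IH =>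
    intro S b hcard hS hM
    have key : ∀ v ∉ S, lam < max (gcost G S v) (FV G (!b) (insert v S)) := by
      intro v hv
      by_cases hins : insert v S = Finset.univ
      · have hSe : S = Finset.univ.erase v := eq_erase_of_insert_eq_univ hv hins
        have : gcost G S v = Mv G v := by rw [hSe]; rfl
        exact lt_max_iff.mpr (Or.inl (this ▸ hM v hv))
      · refine lt_max_iff.mpr (Or.inr ?_)
        exact IH _ (hcard ▸ rem_insert_lt hv) (insert v S) (!b) rfl hins
          (fun z hz => hM z (fun h => hz (Finset.mem_insert_of_mem h)))
    cases b with
    | true =>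
      rw [lt_FV_true_iff hS]
      intro v hv
      simpa using key v hv
    | false =>
      rw [lt_FV_false_iff hS]
      obtain ⟨v, hv⟩ := (rem_nonempty_iff S).mpr hS
      have hv' : v ∉ S := (Finset.mem_filter.mp hv).2
      exact ⟨v, hv', by simpa using key v hv'⟩

/-- Combined induction: (a) adding a prepaid vertex of small final cost keeps
the Alice-to-move value above `lam`; (b) the Bob-to-move value dominates the
Alice-to-move value at threshold `lam`. -/
lemma mainD (lam : ℕ) : ∀ n (S : Finset V),
    (Finset.univ.filter (fun v : V => v ∉ S)).card = n →
    ((∀ φ ∉ S, Mv G φ ≤ lam → lam < FV G true S → lam < FV G true (insert φ S)) ∧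
     (lam < FV G true S → lam < FV G false S)) := by
  intro n
  induction n using Nat.strong_induction_on with
  | _ n IH =>
    intro S hcard
    have lemD : ∀ φ ∉ S, Mv G φ ≤ lam → lam < FV G true S →
        lam < FV G true (insert φ S) := by
      intro φ hφ hMφ hlt
      have hS : S ≠ Finset.univ := ne_univ_of_lt_FV hlt
      rw [lt_FV_true_iff hS] at hlt
      -- `insert φ S ≠ univ`
      have hne2 : insert φ S ≠ Finset.univ := by
        intro hins
        have h1 := hlt φ hφ
        rw [hins, FV_univ] at h1
        have h2 : lam < gcost G S φ := by simpa using h1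
        exact absurd (lt_of_lt_of_le h2 (le_trans (gcost_le_Mv hφ) hMφ)) (lt_irrefl _)
      rw [lt_FV_true_iff hne2]
      intro x hx
      have hxφ : x ≠ φ := fun h => hx (h ▸ Finset.mem_insert_self φ S)
      have hxS : x ∉ S := fun h => hx (Finset.mem_insert_of_mem h)
      rcases lt_max_iff.mp (hlt x hxS) with hcost | hfut
      · exact lt_max_iff.mpr (Or.inl
          (lt_of_lt_of_le hcost (gcost_mono (Finset.subset_insert φ S) x)))
      · -- `lam < FV G false (insert x S)`
        refine lt_max_iff.mpr (Or.inr ?_)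
        have hxne : insert x S ≠ Finset.univ := ne_univ_of_lt_FV hfut
        rw [lt_FV_false_iff hxne] at hfut
        obtain ⟨y, hy, hylt⟩ := hfut
        by_cases hyφ : y = φ
        · -- Bob's reply was the prepaid vertex: use Main at the smaller set
          subst hyφ
          have hyc : gcost G (insert x S) y ≤ lam :=
            le_trans (gcost_le_Mv hy) hMφ
          have h3 : lam < FV G true (insert y (insert x S)) := by
            rcases lt_max_iff.mp hylt with h | h
            · omega
            · exact h
          have hcard2 : (Finset.univ.filter
              (fun v : V => v ∉ insert y (insert x S))).card < n := by
            calc _ < (Finset.univ.filter (fun v : V => v ∉ insert x S)).card :=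
                  rem_insert_lt hy
              _ < n := hcard ▸ rem_insert_lt hxS
          have h4 := (IH _ hcard2 (insert y (insert x S)) rfl).2 h3
          rwa [Finset.insert_comm] at h4
        · -- Bob's reply is another vertex
          have hyins : y ∉ insert x (insert φ S) := by
            simp only [Finset.mem_insert] at hy ⊢
            push_neg at hy ⊢
            exact ⟨hy.1, hyφ, hy.2⟩
          have hne3 : insert x (insert φ S) ≠ Finset.univ := by
            intro h
            exact hyins (h ▸ Finset.mem_univ y)
          rw [lt_FV_false_iff hne3]
          refine ⟨y, hyins, ?_⟩
          rcases lt_max_iff.mp hylt with h | h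
          · refine lt_max_iff.mpr (Or.inl (lt_of_lt_of_le h (gcost_mono ?_ y)))
            intro u hu
            rcases Finset.mem_insert.mp hu with rfl | hu
            · exact Finset.mem_insert_self u _
            · exact Finset.mem_insert_of_mem (Finset.mem_insert_of_mem hu)
          · -- use LemD at the smaller set `insert y (insert x S)`
            have hφ2 : φ ∉ insert y (insert x S) := by
              simp only [Finset.mem_insert]
              push_neg
              exact ⟨fun hh => hyφ hh.symm, fun hh => hxφ hh.symm, hφ⟩
            have hcard2 : (Finset.univ.filter
                (fun v : V => v ∉ insert y (insert x S))).card < n := by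
              calc _ < (Finset.univ.filter (fun v : V => v ∉ insert x S)).card :=
                    rem_insert_lt hy
                _ < n := hcard ▸ rem_insert_lt hxS
            have h4 := (IH _ hcard2 (insert y (insert x S)) rfl).1 φ hφ2 hMφ h
            refine lt_max_iff.mpr (Or.inr ?_)
            have : insert y (insert x (insert φ S)) =
                insert φ (insert y (insert x S)) := by
              ext u
              simp only [Finset.mem_insert]
              tauto
            rwa [this]
    refine ⟨lemD, ?_⟩
    intro hlt
    have hS : S ≠ Finset.univ := ne_univ_of_lt_FV hlt
    by_cases hc : ∃ φ, φ ∉ S ∧ Mv G φ ≤ lam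
    · obtain ⟨φ, hφ, hMφ⟩ := hc
      have := lemD φ hφ hMφ hlt
      rw [lt_FV_false_iff hS]
      exact ⟨φ, hφ, lt_max_iff.mpr (Or.inr this)⟩
    · push_neg at hc
      exact lemE lam _ S false rfl hS (fun z hz => hc z hz)

/-- The central inequality: the Alice-to-move value never exceeds the
Bob-to-move value. -/
lemma FV_true_le_false (S : Finset V) : FV G true S ≤ FV G false S := by
  by_contra h
  push_neg at h
  exact absurd ((mainD (FV G false S) _ S rfl).2 h) (lt_irrefl _)

lemma backDeg_of_not_mem {τ : List V} {v : V} (h : v ∉ τ) : backDeg G τ v = 0 := by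
  rw [backDeg, Finset.card_eq_zero, Finset.filter_eq_empty_iff]
  rintro u -
  rintro ⟨-, i, j, -, -, hj⟩
  rw [List.get_eq_getElem] at hj
  exact h (hj ▸ List.getElem_mem _)

set_option linter.unusedSectionVars false in
lemma length_append_one (σ : List V) (v : V) : (σ ++ [v]).length = σ.length + 1 := by
  simp

lemma backDeg_append_ne {σ : List V} {v w : V} (h : w ≠ v) :
    backDeg G (σ ++ [v]) w = backDeg G σ w := by
  rw [backDeg, backDeg]
  congr 1
  apply Finset.filter_congr
  intro u _
  apply and_congr_right
  intro _
  constructor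
  · rintro ⟨i, j, hij, hi, hj⟩
    rw [List.get_eq_getElem] at hi hj
    have hjlen : (j : ℕ) < σ.length + 1 := by
      have := j.isLt; simpa using this
    have hjlt : (j : ℕ) < σ.length := by
      rcases Nat.lt_or_ge (j : ℕ) σ.length with hh | hh
      · exact hh
      · exfalso
        have hje : (j : ℕ) = σ.length := by omega
        have : (σ ++ [v])[(j : ℕ)] = v := List.getElem_concat_length hje _
        exact h (hj ▸ this)
    have hilt : (i : ℕ) < σ.length := lt_trans hij hjlt
    refine ⟨⟨i, hilt⟩, ⟨j, hjlt⟩, hij, ?_, ?_⟩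
    · rw [List.get_eq_getElem]
      exact (List.getElem_append_left hilt) ▸ hi
    · rw [List.get_eq_getElem]
      exact (List.getElem_append_left hjlt) ▸ hj
  · rintro ⟨i, j, hij, hi, hj⟩
    rw [List.get_eq_getElem] at hi hj
    have hilt : (i : ℕ) < (σ ++ [v]).length := by
      rw [length_append_one]; exact lt_trans i.isLt (Nat.lt_succ_self _)
    have hjlt : (j : ℕ) < (σ ++ [v]).length := by
      rw [length_append_one]; exact lt_trans j.isLt (Nat.lt_succ_self _)
    refine ⟨⟨i, hilt⟩, ⟨j, hjlt⟩, hij, ?_, ?_⟩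
    · rw [List.get_eq_getElem]
      simpa [List.getElem_append_left i.isLt] using hi
    · rw [List.get_eq_getElem]
      simpa [List.getElem_append_left j.isLt] using hj

lemma backDeg_append_self {σ : List V} {v : V} (h : v ∉ σ) :
    backDeg G (σ ++ [v]) v =
      (Finset.univ.filter (fun u => G.Adj v u ∧ u ∈ σ)).card := by
  rw [backDeg]
  congr 1
  apply Finset.filter_congr
  intro u _
  apply and_congr_right
  intro _
  constructor
  · rintro ⟨i, j, hij, hi, hj⟩
    rw [List.get_eq_getElem] at hi hj
    have hjlen : (j : ℕ) < σ.length + 1 := by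
      have := j.isLt; simpa using this
    have hje : (j : ℕ) = σ.length := by
      rcases Nat.lt_or_ge (j : ℕ) σ.length with hh | hh
      · exfalso
        have : (σ ++ [v])[(j : ℕ)] = σ[(j : ℕ)] := List.getElem_append_left hh
        exact h ((hj ▸ this).symm ▸ List.getElem_mem hh)
      · omega
    have hilt : (i : ℕ) < σ.length := by
      have : (i : ℕ) < (j : ℕ) := hij
      omega
    have : (σ ++ [v])[(i : ℕ)] = σ[(i : ℕ)] := List.getElem_append_left hilt
    rw [this] at hi
    exact hi ▸ List.getElem_mem hilt
  · intro hu
    obtain ⟨i, hilt, hi⟩ := List.mem_iff_getElem.mp hu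
    have h1 : (i : ℕ) < (σ ++ [v]).length := by rw [length_append_one]; omega
    have h2 : σ.length < (σ ++ [v]).length := by rw [length_append_one]; omega
    refine ⟨⟨i, h1⟩, ⟨σ.length, h2⟩, hilt, ?_, ?_⟩
    · rw [List.get_eq_getElem]
      simpa [List.getElem_append_left hilt] using hi
    · rw [List.get_eq_getElem]
      exact List.getElem_concat_length rfl _

lemma gcost_toFinset (σ : List V) (v : V) :
    gcost G σ.toFinset v = 1 + (Finset.univ.filter (fun u => G.Adj v u ∧ u ∈ σ)).card := by
  rw [gcost]
  congr 2
  apply Finset.filter_congr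
  intro u _
  simp [List.mem_toFinset]

lemma colOrd_append {σ : List V} {v : V} (h : v ∉ σ) :
    colOrd G (σ ++ [v]) = max (colOrd G σ) (gcost G σ.toFinset v) := by
  rw [colOrd, colOrd, gcost_toFinset]
  apply le_antisymm
  · apply Finset.sup_le
    intro w _
    show 1 + backDeg G (σ ++ [v]) w ≤ _
    by_cases hw : w = v
    · subst hw
      rw [backDeg_append_self h]
      exact le_max_right _ _
    · rw [backDeg_append_ne hw]
      exact le_trans (Finset.le_sup (f := fun u => 1 + backDeg G σ u)
        (Finset.mem_univ w)) (le_max_left _ _)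
  · apply max_le
    · apply Finset.sup_le
      intro w _
      show 1 + backDeg G σ w ≤ _
      refine le_trans ?_ (Finset.le_sup (f := fun u => 1 + backDeg G (σ ++ [v]) u)
        (Finset.mem_univ w))
      show _ ≤ 1 + backDeg G (σ ++ [v]) w
      by_cases hw : w = v
      · subst hw
        rw [backDeg_of_not_mem h]
        exact Nat.add_le_add_left (Nat.zero_le _) 1
      · rw [backDeg_append_ne hw]
    · rw [← backDeg_append_self h]
      exact Finset.le_sup (f := fun u => 1 + backDeg G (σ ++ [v]) u) (Finset.mem_univ v)

lemma inf'_const_max {α : Type*} (s : Finset α) (H : s.Nonempty) (K : ℕ) (f : α → ℕ) :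
    s.inf' H (fun a => max K (f a)) = max K (s.inf' H f) := by
  apply le_antisymm
  · obtain ⟨a, ha, hfa⟩ := s.exists_mem_eq_inf' H f
    refine le_trans (Finset.inf'_le _ ha) ?_
    rw [hfa]
  · rw [Finset.le_inf'_iff]
    intro b hb
    exact max_le_max (le_refl K) (Finset.inf'_le _ hb)

lemma sup'_const_max {α : Type*} (s : Finset α) (H : s.Nonempty) (K : ℕ) (f : α → ℕ) :
    s.sup' H (fun a => max K (f a)) = max K (s.sup' H f) := by
  apply le_antisymm
  · rw [Finset.sup'_le_iff]
    intro b hb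
    exact max_le_max (le_refl K) (Finset.le_sup' _ hb)
  · obtain ⟨a, ha, hfa⟩ := s.exists_mem_eq_sup' H f
    refine le_trans ?_ (Finset.le_sup' _ ha)
    rw [hfa]

lemma inf'_attach_congr {s t : Finset V} (h : s = t) (g : V → ℕ) (Hs : s.attach.Nonempty) :
    s.attach.inf' Hs (fun v => g v.1) =
      t.attach.inf' (by subst h; exact Hs) (fun v => g v.1) := by
  subst h; rfl

lemma sup'_attach_congr {s t : Finset V} (h : s = t) (g : V → ℕ) (Hs : s.attach.Nonempty) :
    s.attach.sup' Hs (fun v => g v.1) =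
      t.attach.sup' (by subst h; exact Hs) (fun v => g v.1) := by
  subst h; rfl

lemma filter_list_eq (σ : List V) :
    (Finset.univ.filter (fun v : V => v ∉ σ)) =
      (Finset.univ.filter (fun v : V => v ∉ σ.toFinset)) := by
  apply Finset.filter_congr
  intro v _
  simp [List.mem_toFinset]

lemma toFinset_append_one (σ : List V) (v : V) :
    (σ ++ [v]).toFinset = insert v σ.toFinset := by
  ext u
  simp [or_comm]

lemma rem_append_lt {σ : List V} {v : V} (hv : v ∉ σ) :
    (Finset.univ.filter (fun u : V => u ∉ σ ++ [v])).card <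
      (Finset.univ.filter (fun u : V => u ∉ σ)).card := by
  apply Finset.card_lt_card
  constructor
  · intro u hu
    simp only [Finset.mem_filter, List.mem_append] at hu ⊢
    exact ⟨hu.1, fun h' => hu.2 (Or.inl h')⟩
  · intro hsub
    have := hsub (Finset.mem_filter.mpr ⟨Finset.mem_univ _, hv⟩)
    simp at this

lemma gameVal_eq_FV : ∀ n (b : Bool) (σ : List V),
    (Finset.univ.filter (fun v : V => v ∉ σ)).card = n →
    gameVal G b σ = max (colOrd G σ) (FV G b σ.toFinset) := by
  intro n
  induction n using Nat.strong_induction_on with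
  | _ n IH =>
    intro b σ hcard
    by_cases h : (Finset.univ.filter (fun v : V => v ∉ σ)).Nonempty
    · have hS : (Finset.univ.filter (fun v : V => v ∉ σ.toFinset)).Nonempty := by
        rwa [← filter_list_eq]
      cases b with
      | true =>
        have step : ∀ v ∈ (Finset.univ.filter (fun v : V => v ∉ σ)).attach,
            gameVal G false (σ ++ [v.1]) =
              max (colOrd G σ) (max (gcost G σ.toFinset v.1)
                (FV G false (insert v.1 σ.toFinset))) := by
          intro v _
          have hv : v.1 ∉ σ := (Finset.mem_filter.mp v.2).2
          rw [IH _ (hcard ▸ rem_append_lt hv) false (σ ++ [v.1]) rfl,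
            colOrd_append hv, toFinset_append_one, max_assoc]
        rw [gameVal, dif_pos h, if_pos rfl]
        rw [Finset.inf'_congr (Finset.attach_nonempty_iff.mpr h) rfl step]
        rw [inf'_const_max]
        congr 1
        rw [FV, dif_pos hS, if_pos rfl]
        exact inf'_attach_congr (filter_list_eq σ)
          (fun x => max (gcost G σ.toFinset x) (FV G false (insert x σ.toFinset))) _
      | false =>
        have step : ∀ v ∈ (Finset.univ.filter (fun v : V => v ∉ σ)).attach,
            gameVal G true (σ ++ [v.1]) =
              max (colOrd G σ) (max (gcost G σ.toFinset v.1)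
                (FV G true (insert v.1 σ.toFinset))) := by
          intro v _
          have hv : v.1 ∉ σ := (Finset.mem_filter.mp v.2).2
          rw [IH _ (hcard ▸ rem_append_lt hv) true (σ ++ [v.1]) rfl,
            colOrd_append hv, toFinset_append_one, max_assoc]
        rw [gameVal, dif_pos h, if_neg (by simp)]
        rw [Finset.sup'_congr (Finset.attach_nonempty_iff.mpr h) rfl step]
        rw [sup'_const_max]
        congr 1
        rw [FV, dif_pos hS, if_neg (by simp)]
        exact sup'_attach_congr (filter_list_eq σ)
          (fun x => max (gcost G σ.toFinset x) (FV G true (insert x σ.toFinset))) _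
    · rw [gameVal, dif_neg h]
      have hU : σ.toFinset = Finset.univ := by
        apply Finset.eq_univ_iff_forall.mpr
        intro v
        rw [List.mem_toFinset]
        by_contra hv
        exact h ⟨v, Finset.mem_filter.mpr ⟨Finset.mem_univ _, hv⟩⟩
      rw [hU, FV_univ]
      exact (max_eq_left (Nat.zero_le _)).symm

lemma gameVal_true_le_false (σ : List V) :
    gameVal G true σ ≤ gameVal G false σ := by
  rw [gameVal_eq_FV _ true σ rfl, gameVal_eq_FV _ false σ rfl]
  exact max_le_max (le_refl _) (FV_true_le_false _)

lemma gameValAliceSkip_eq_gameVal : ∀ n (σ : List V),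
    (Finset.univ.filter (fun v : V => v ∉ σ)).card = n →
    gameValAliceSkip G false σ = gameVal G false σ ∧
      gameValAliceSkip G true σ = gameVal G true σ := by
  intro n
  induction n using Nat.strong_induction_on with
  | _ n IH =>
    intro σ hcard
    by_cases h : (Finset.univ.filter (fun v : V => v ∉ σ)).Nonempty
    · have hfalse : gameValAliceSkip G false σ = gameVal G false σ := by
        rw [gameValAliceSkip, dif_pos h, if_neg (by simp),
          gameVal, dif_pos h, if_neg (by simp)]
        apply Finset.sup'_congr (Finset.attach_nonempty_iff.mpr h) rfl
        intro v _
        have hv : v.1 ∉ σ := (Finset.mem_filter.mp v.2).2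
        exact (IH _ (hcard ▸ rem_append_lt hv) (σ ++ [v.1]) rfl).2
      refine ⟨hfalse, ?_⟩
      rw [gameValAliceSkip, dif_pos h, if_pos rfl, hfalse]
      have hinf : (Finset.univ.filter (fun v : V => v ∉ σ)).attach.inf'
          (Finset.attach_nonempty_iff.mpr h)
          (fun v => gameValAliceSkip G false (σ ++ [v.1])) = gameVal G true σ := by
        rw [gameVal, dif_pos h, if_pos rfl]
        apply Finset.inf'_congr (Finset.attach_nonempty_iff.mpr h) rfl
        intro v _
        have hv : v.1 ∉ σ := (Finset.mem_filter.mp v.2).2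
        exact (IH _ (hcard ▸ rem_append_lt hv) (σ ++ [v.1]) rfl).1
      rw [hinf]
      exact min_eq_right (gameVal_true_le_false σ)
    · constructor <;>
        rw [gameValAliceSkip, dif_neg h, gameVal, dif_neg h]

end AliceSkipAux

/-- The value of the Alice-skip ordering game on `G` equals
`gcol(G)`: Alice cannot guarantee a score smaller than `gcol(G)` by skipping
any number of her turns. -/
theorem aliceSkip_value_eq_gcol {V : Type*} [Fintype V] (G : SimpleGraph V) :
    gameValAliceSkip G true [] = gcol G :=
  (gameValAliceSkip_eq_gameVal _ ([] : List V) rfl).2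
end
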